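/- arXiv:2309.05954 — 3 statements merged into one kernel-verified Lean document; each statement's English description precedes it below -/
import Mathlib

section
/- Let (V,E,Ψ) be a strongly connected planar box-like self-affine GIFS with positive weights (p_e) and graph-directed measure family (μ_v)_{v∈V}, and fix s∈ℝ and q≥0. For all admissible words w,w'∈E^* with t(w)=i(w'): (a1) if s<t(q) then φ^{s,q}(ww') ≤ φ^{s,q}(w)·φ^{s,q}(w'); (a2) if s=t(q) then φ^{s,q}(ww') = φ^{s,q}(w)·φ^{s,q}(w'); (a3) if s>t(q) then φ^{s,q}(ww') ≥ φ^{s,q}(w)·φ^{s,q}(w'). -/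
open MeasureTheory Filter Set
open scoped Classical

noncomputable section

namespace LqGIFS

/-! ### Mesh cubes, moment sums, L^q spectra, box dimension -/

/-- Closed cube of the `δ`-mesh of `ℝ`. -/
def meshCube1 (δ : ℝ) (k : ℤ) : Set ℝ := Set.Icc ((k : ℝ) * δ) (((k : ℝ) + 1) * δ)

/-- Closed cube of the `δ`-mesh of `ℝ²`. -/
def meshCube2 (δ : ℝ) (k : ℤ × ℤ) : Set (ℝ × ℝ) :=
  (Set.Icc ((k.1 : ℝ) * δ) (((k.1 : ℝ) + 1) * δ)) ×ˢ
    (Set.Icc ((k.2 : ℝ) * δ) (((k.2 : ℝ) + 1) * δ))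

/-- The moment sum `D_δ^q(ν)` for a measure on `ℝ` (cubes of zero measure are omitted,
so that at `q = 0` this counts the mesh cubes of positive measure). -/
def Dq1 (ν : Measure ℝ) (δ q : ℝ) : ℝ :=
  ∑' k : ℤ, if ν (meshCube1 δ k) = 0 then 0 else (ν (meshCube1 δ k)).toReal ^ q

/-- The moment sum `D_δ^q(ν)` for a measure on `ℝ²`. -/
def Dq2 (ν : Measure (ℝ × ℝ)) (δ q : ℝ) : ℝ :=
  ∑' k : ℤ × ℤ, if ν (meshCube2 δ k) = 0 then 0 else (ν (meshCube2 δ k)).toReal ^ q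

/-- The `L^q`-spectrum of a measure on `ℝ` exists and equals `s` (i.e. upper and lower
`L^q`-spectra coincide and equal `s`). -/
def HasLq1 (ν : Measure ℝ) (q s : ℝ) : Prop :=
  Tendsto (fun δ : ℝ => Real.log (Dq1 ν δ q) / (-Real.log δ))
    (nhdsWithin 0 (Set.Ioi 0)) (nhds s)

/-- The `L^q`-spectrum of a measure on `ℝ²` exists and equals `s`. -/
def HasLq2 (ν : Measure (ℝ × ℝ)) (q s : ℝ) : Prop :=
  Tendsto (fun δ : ℝ => Real.log (Dq2 ν δ q) / (-Real.log δ))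
    (nhdsWithin 0 (Set.Ioi 0)) (nhds s)

/-- Number of closed `δ`-mesh cubes of `ℝ²` meeting `X`. -/
def boxCount (X : Set (ℝ × ℝ)) (δ : ℝ) : ℕ :=
  Set.ncard {k : ℤ × ℤ | (X ∩ meshCube2 δ k).Nonempty}

/-- The box dimension of `X` exists and equals `d`. -/
def HasBoxDim (X : Set (ℝ × ℝ)) (d : ℝ) : Prop :=
  Tendsto (fun δ : ℝ => Real.log (boxCount X δ) / (-Real.log δ))
    (nhdsWithin 0 (Set.Ioi 0)) (nhds d)

/-! ### Matrices: 1-norm, spectral radius, permutation matrices -/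

/-- The 1-norm `‖A‖ = ∑_{i,j} |a_{ij}|` of a square matrix. -/
def mnorm {ι : Type*} [Fintype ι] (A : Matrix ι ι ℝ) : ℝ := ∑ i, ∑ j, |A i j|

/-- The spectral radius of a square real matrix, via the Gelfand formula. -/
def specRad {ι : Type*} [Fintype ι] [DecidableEq ι] (A : Matrix ι ι ℝ) : ℝ :=
  Filter.limsup (fun k : ℕ => (mnorm (A ^ k)) ^ ((k : ℝ)⁻¹)) Filter.atTop

/-- A square 0-1 matrix with exactly one 1 in each row and each column. -/
def IsPermMatrix {ι : Type*} (Z : Matrix ι ι ℝ) : Prop :=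
  (∀ i j, Z i j = 0 ∨ Z i j = 1) ∧ (∀ i, ∃! j, Z i j = 1) ∧ (∀ j, ∃! i, Z i j = 1)

/-! ### Directed graphs -/

/-- Strong connectivity of the finite directed graph with edge set `E`,
initial vertex map `ini` and terminal vertex map `ter`. -/
def GraphSC {V E : Type*} (ini ter : E → V) : Prop :=
  ∀ v v' : V, Relation.TransGen (fun u u' : V => ∃ e, ini e = u ∧ ter e = u') v v'

/-- The matrix `F^{(q)}_{x,y}` with entry `p_{e'}^q a_{e'}^x b_{e'}^y` at `(e,e')` when
`t(e) = i(e')`, and `0` otherwise. -/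
def FmatG {V E : Type*} (ini ter : E → V) (p a b : E → ℝ) (q x y : ℝ) :
    Matrix E E ℝ :=
  fun e e' => if ter e = ini e' then p e' ^ q * a e' ^ x * b e' ^ y else 0

/-- `f` is the entrywise product of the normalized left and right Perron vectors of the
irreducible matrix `F^{(q)}_{x,y(x)}` (spectral radius 1). -/
def IsPerronData {V E : Type*} [Fintype E] [DecidableEq E] (ini ter : E → V)
    (p a b : E → ℝ) (q x yx : ℝ) (f : E → ℝ) : Prop :=
  specRad (FmatG ini ter p a b q x yx) = 1 ∧
  ∃ u v : E → ℝ, (∀ e, 0 < u e) ∧ (∀ e, 0 < v e) ∧ (∑ e, u e) = 1 ∧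
    (FmatG ini ter p a b q x yx).mulVec u = u ∧
    (FmatG ini ter p a b q x yx).vecMul v = v ∧
    (∑ e, v e * u e) = 1 ∧ (∀ e, f e = v e * u e)

/-! ### Planar box-like graph-directed self-affine systems -/

/-- A planar box-like self-affine GIFS: a finite directed graph together with, for each
edge `e`, a contraction `ψ_e(z) = T_e z + t_e` whose linear part is the diagonal matrix
`diag(±a_e, ±b_e)` (when `diag e = true`) or the anti-diagonal matrix with entries
`±a_e` (top right) and `±b_e` (bottom left) (when `diag e = false`), `0 < a_e, b_e < 1`. -/
structure BoxLikeGIFS (V E : Type*) where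
  init : E → V
  term : E → V
  a : E → ℝ
  b : E → ℝ
  sa : E → ℝ
  sb : E → ℝ
  diag : E → Bool
  trans : E → ℝ × ℝ
  a_mem : ∀ e, a e ∈ Set.Ioo (0 : ℝ) 1
  b_mem : ∀ e, b e ∈ Set.Ioo (0 : ℝ) 1
  sa_mem : ∀ e, sa e = 1 ∨ sa e = -1
  sb_mem : ∀ e, sb e = 1 ∨ sb e = -1
  edge_exists : ∀ v, ∃ e, init e = v

namespace BoxLikeGIFS

variable {V E : Type*}

/-- The contraction `ψ_e`. -/
def map (S : BoxLikeGIFS V E) (e : E) : ℝ × ℝ → ℝ × ℝ := fun z =>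
  if S.diag e then
    (S.sa e * S.a e * z.1 + (S.trans e).1, S.sb e * S.b e * z.2 + (S.trans e).2)
  else
    (S.sa e * S.a e * z.2 + (S.trans e).1, S.sb e * S.b e * z.1 + (S.trans e).2)

def StronglyConnected (S : BoxLikeGIFS V E) : Prop := GraphSC S.init S.term

/-- The open unit square `(0,1)²`. -/
def unitSq : Set (ℝ × ℝ) := Set.Ioo (0 : ℝ) 1 ×ˢ Set.Ioo (0 : ℝ) 1

/-- The rectangular open set condition. -/
def ROSC (S : BoxLikeGIFS V E) : Prop :=
  (∀ e : E, S.map e '' unitSq ⊆ unitSq) ∧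
  ∀ e e' : E, e ≠ e' → S.init e = S.init e' →
    Disjoint (S.map e '' unitSq) (S.map e' '' unitSq)

/-- Positive weights summing to one at each vertex. -/
def IsWeights [Fintype E] (S : BoxLikeGIFS V E) (p : E → ℝ) : Prop :=
  (∀ e, 0 < p e) ∧ ∀ v : V, (∑ e : E, if S.init e = v then p e else 0) = 1

/-- `μ` is the associated graph-directed box-like self-affine measure family. -/
def IsGDMeasure [Fintype E] (S : BoxLikeGIFS V E) (p : E → ℝ)
    (μ : V → Measure (ℝ × ℝ)) : Prop :=
  (∀ v, IsProbabilityMeasure (μ v)) ∧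
  ∀ v : V, μ v =
    ∑ e : E, if S.init e = v then
      ENNReal.ofReal (p e) • ((μ (S.term e)).map (S.map e)) else (0 : Measure (ℝ × ℝ))

/-- `X` is the associated graph-directed self-affine carpet family. -/
def IsGDAttractor (S : BoxLikeGIFS V E) (X : V → Set (ℝ × ℝ)) : Prop :=
  (∀ v, (X v).Nonempty ∧ IsCompact (X v)) ∧
  ∀ v : V, X v = ⋃ e : E, ⋃ _ : S.init e = v, S.map e '' X (S.term e)

/-- The matrix `F^{(q)}_{x,y}` of the system. -/
def Fmat (S : BoxLikeGIFS V E) (p : E → ℝ) (q x y : ℝ) : Matrix E E ℝ :=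
  FmatG S.init S.term p S.a S.b q x y

/-- The `(2#E) × (2#E)` block matrix `𝒢^{(q)}_{x,y}`, indexed by `E × Bool`
(`false` = first index of the block, `true` = second). -/
def Gmat (S : BoxLikeGIFS V E) (p : E → ℝ) (τx τy : V → ℝ) (q x y : ℝ) :
    Matrix (E × Bool) (E × Bool) ℝ := fun i j =>
  if S.term i.1 = S.init j.1 then
    if S.diag j.1 then
      if i.2 = false ∧ j.2 = false then
        p j.1 ^ q * S.a j.1 ^ (x + τx (S.term j.1)) * S.b j.1 ^ (y - τx (S.term j.1))
      else if i.2 = true ∧ j.2 = true then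
        p j.1 ^ q * S.b j.1 ^ (x + τy (S.term j.1)) * S.a j.1 ^ (y - τy (S.term j.1))
      else 0
    else
      if i.2 = false ∧ j.2 = true then
        p j.1 ^ q * S.a j.1 ^ (x + τy (S.term j.1)) * S.b j.1 ^ (y - τy (S.term j.1))
      else if i.2 = true ∧ j.2 = false then
        p j.1 ^ q * S.b j.1 ^ (x + τx (S.term j.1)) * S.a j.1 ^ (y - τx (S.term j.1))
      else 0
  else 0

/-! ### Words -/

/-- An admissible word: consecutive edges are composable. -/
def Admissible (S : BoxLikeGIFS V E) (w : List E) : Prop :=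
  List.Chain' (fun e e' => S.term e = S.init e') w

/-- `(c_w, d_w)`: width and height of the rectangle `ψ_w([0,1]²)`. -/
def wdims (S : BoxLikeGIFS V E) : List E → ℝ × ℝ
  | [] => (1, 1)
  | e :: w =>
      if S.diag e then (S.a e * (wdims S w).1, S.b e * (wdims S w).2)
      else (S.a e * (wdims S w).2, S.b e * (wdims S w).1)

/-- Whether `T_w` is diagonal (`true`) or anti-diagonal (`false`). -/
def wordDiag (S : BoxLikeGIFS V E) : List E → Bool
  | [] => true
  | e :: w => S.diag e == wordDiag S w

/-- The larger singular value `α₁(w) = max(c_w, d_w)` of `T_w`. -/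
def alpha1 (S : BoxLikeGIFS V E) (w : List E) : ℝ := max (S.wdims w).1 (S.wdims w).2

/-- The smaller singular value `α₂(w) = min(c_w, d_w)` of `T_w`. -/
def alpha2 (S : BoxLikeGIFS V E) (w : List E) : ℝ := min (S.wdims w).1 (S.wdims w).2

/-- Initial vertex of a (nonempty) word. -/
def wordInit [Nonempty V] (S : BoxLikeGIFS V E) (w : List E) : V :=
  (w.head?.map S.init).getD (Classical.arbitrary V)

/-- Terminal vertex of a (nonempty) word. -/
def wordTerm [Nonempty V] (S : BoxLikeGIFS V E) (w : List E) : V :=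
  (w.getLast?.map S.term).getD (Classical.arbitrary V)

/-- `p_w = p_{w_1} ⋯ p_{w_k}`. -/
def wordProb (p : E → ℝ) (w : List E) : ℝ := (w.map p).prod

/-- `τ_w(q)`: given the values `τx v`, `τy v` of the `L^q`-spectra of the two coordinate
projections of `μ_v`, this is the `L^q`-spectrum of the projection of `μ_{t(w)} ∘ ψ_w⁻¹`
onto the longest side of `ψ_w([0,1]²)`, i.e. `τx (t w)` if `π_w = π_x` and `τy (t w)`
otherwise. -/
def wordTau [Nonempty V] (S : BoxLikeGIFS V E) (τx τy : V → ℝ) (w : List E) : ℝ :=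
  if ((S.wdims w).2 ≤ (S.wdims w).1 ↔ S.wordDiag w = true) then τx (S.wordTerm w)
  else τy (S.wordTerm w)

/-- The modified singular value function
`φ^{s,q}(w) = p_w^q α₁(w)^{τ_w(q)} α₂(w)^{s - τ_w(q)}`. -/
def msvf [Nonempty V] (S : BoxLikeGIFS V E) (p : E → ℝ) (τx τy : V → ℝ)
    (s q : ℝ) (w : List E) : ℝ :=
  wordProb p w ^ q * S.alpha1 w ^ (S.wordTau τx τy w) *
    S.alpha2 w ^ (s - S.wordTau τx τy w)

/-- The modified singular value function matrix `A_k^{s,q}`. -/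
def Amat [Nonempty V] [Fintype E] (S : BoxLikeGIFS V E) (p : E → ℝ) (τx τy : V → ℝ)
    (s q : ℝ) (k : ℕ) : Matrix V V ℝ := fun v v' =>
  ∑ f : Fin k → E,
    if S.Admissible (List.ofFn f) ∧ S.wordInit (List.ofFn f) = v ∧
        S.wordTerm (List.ofFn f) = v'
    then S.msvf p τx τy s q (List.ofFn f) else 0

/-- The family `E^*_δ` of admissible words whose shortest side drops below `δ`
exactly at the last letter. -/
def EstarDelta (S : BoxLikeGIFS V E) (δ : ℝ) : Set (List E) :=
  {w | w ≠ [] ∧ S.Admissible w ∧ S.alpha2 w < δ ∧ δ ≤ S.alpha2 w.dropLast}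

end BoxLikeGIFS

/-! ### Partition of the projections, for the splitting proposition -/

/-- The projection family: `(v, false) ↦ μ_v^x` and `(v, true) ↦ μ_v^y`. -/
def projMeas {V : Type*} (μ : V → Measure (ℝ × ℝ)) (i : V × Bool) : Measure ℝ :=
  if i.2 then (μ i.1).map Prod.snd else (μ i.1).map Prod.fst

/-- `A`, `B` is a partition of the projection family `{μ_v^x, μ_v^y}_v` into two disjoint
families of cardinality `#V`, on each of which the `L^q`-spectra exist and share a common
value, and which splits `{μ_v^x, μ_v^y}` for each `v`. -/
def GoodPartition {V : Type*} [Fintype V] (μ : V → Measure (ℝ × ℝ))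
    (A B : Finset (V × Bool)) : Prop :=
  Disjoint A B ∧ A ∪ B = Finset.univ ∧
  A.card = Fintype.card V ∧ B.card = Fintype.card V ∧
  ∃ τA τB : ℝ → ℝ,
    (∀ q : ℝ, 0 ≤ q → ∀ i ∈ A, HasLq1 (projMeas μ i) q (τA q)) ∧
    (∀ q : ℝ, 0 ≤ q → ∀ i ∈ B, HasLq1 (projMeas μ i) q (τB q)) ∧
    ∀ v : V, ((v, false) ∈ A ∧ (v, true) ∈ B) ∨ ((v, false) ∈ B ∧ (v, true) ∈ A)

end LqGIFS

end

open LqGIFS MeasureTheory Filter Set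

noncomputable section Aux14

open scoped ENNReal

namespace LqGIFS

/-- the term function of the moment sums -/
def mterm (q : ℝ) (x : ℝ≥0∞) : ℝ := if x = 0 then 0 else x.toReal ^ q

lemma mterm_nonneg (q : ℝ) (x : ℝ≥0∞) : 0 ≤ mterm q x := by
  unfold mterm; split
  · exact le_rfl
  · exact Real.rpow_nonneg ENNReal.toReal_nonneg q

lemma mterm_pos {q : ℝ} {x : ℝ≥0∞} (hx : x ≠ 0) (hx' : x ≠ ⊤) : 0 < mterm q x := by
  unfold mterm
  rw [if_neg hx]
  exact Real.rpow_pos_of_pos (ENNReal.toReal_pos hx hx') q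

lemma mterm_mono {q : ℝ} (hq : 0 ≤ q) {x y : ℝ≥0∞} (hy : y ≠ ⊤) (hxy : x ≤ y) :
    mterm q x ≤ mterm q y := by
  unfold mterm
  by_cases hx : x = 0
  · rw [if_pos hx]; split
    · exact le_rfl
    · exact Real.rpow_nonneg ENNReal.toReal_nonneg q
  · have hy0 : y ≠ 0 := fun h => hx (le_antisymm (h ▸ hxy) (zero_le))
    rw [if_neg hx, if_neg hy0]
    exact Real.rpow_le_rpow ENNReal.toReal_nonneg
      (ENNReal.toReal_mono hy hxy) hq

lemma mterm_le_of_smul {q : ℝ} (hq : 0 ≤ q) {c : ℝ} (hc : 0 < c) {x y : ℝ≥0∞} (hy : y ≠ ⊤)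
    (h : ENNReal.ofReal c * x ≤ y) : mterm q x ≤ (1 / c) ^ q * mterm q y := by
  by_cases hx : x = 0
  · rw [mterm, if_pos hx]
    exact mul_nonneg (Real.rpow_nonneg (by positivity) q) (mterm_nonneg q y)
  · have hy0 : y ≠ 0 := by
      intro h0
      rw [h0, nonpos_iff_eq_zero, mul_eq_zero] at h
      rcases h with h | h
      · exact (ENNReal.ofReal_pos.2 hc).ne' h
      · exact hx h
    have hxt : x ≠ ⊤ := by
      intro hxt
      rw [hxt, ENNReal.mul_top (by exact (ENNReal.ofReal_pos.2 hc).ne')] at h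
      exact hy (top_le_iff.1 h)
    rw [mterm, mterm, if_neg hx, if_neg hy0]
    have h1 : c * x.toReal ≤ y.toReal := by
      have := ENNReal.toReal_mono hy h
      rwa [ENNReal.toReal_mul, ENNReal.toReal_ofReal hc.le] at this
    have h2 : x.toReal ≤ y.toReal / c := (le_div_iff₀' hc).2 h1
    calc x.toReal ^ q ≤ (y.toReal / c) ^ q :=
          Real.rpow_le_rpow ENNReal.toReal_nonneg h2 hq
      _ = (1 / c) ^ q * y.toReal ^ q := by
          rw [div_eq_mul_inv, ← one_div, Real.mul_rpow ENNReal.toReal_nonneg (by positivity),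
            mul_comm]

lemma mterm_add_le {q : ℝ} (hq : 0 ≤ q) {u x y : ℝ≥0∞} (hx : x ≠ ⊤) (hy : y ≠ ⊤)
    (h : u ≤ x + y) : mterm q u ≤ (2:ℝ) ^ q * (mterm q x + mterm q y) := by
  have h2q : (1:ℝ) ≤ 2 ^ q := by
    calc (1:ℝ) = 2 ^ (0:ℝ) := (Real.rpow_zero 2).symm
    _ ≤ 2 ^ q := Real.rpow_le_rpow_of_exponent_le one_le_two hq
  by_cases hu : u = 0
  · rw [mterm, if_pos hu]
    have := mterm_nonneg q x; have := mterm_nonneg q y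
    nlinarith
  by_cases hx0 : x = 0
  · have hu2 : u ≤ y := by rwa [hx0, zero_add] at h
    have := mterm_mono hq hy hu2
    have := mterm_nonneg q x; have h3 := mterm_nonneg q y
    nlinarith
  by_cases hy0 : y = 0
  · have hu2 : u ≤ x := by rwa [hy0, add_zero] at h
    have := mterm_mono hq hx hu2
    have := mterm_nonneg q y; have h3 := mterm_nonneg q x
    nlinarith
  · rw [mterm, mterm, mterm, if_neg hu, if_neg hx0, if_neg hy0]
    set a := x.toReal with ha
    set b := y.toReal with hb
    have hap : 0 < a := ENNReal.toReal_pos hx0 hx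
    have hbp : 0 < b := ENNReal.toReal_pos hy0 hy
    have hult : u ≠ ⊤ := by
      intro hut; rw [hut, top_le_iff] at h
      exact (ENNReal.add_ne_top.2 ⟨hx, hy⟩) h
    have h1 : u.toReal ≤ a + b := by
      have := ENNReal.toReal_mono (ENNReal.add_ne_top.2 ⟨hx, hy⟩) h
      rwa [ENNReal.toReal_add hx hy] at this
    -- wlog-free: u^q ≤ (a+b)^q ≤ (2 max a b)^q = 2^q max^q ≤ 2^q (a^q + b^q)
    have hmax : a + b ≤ 2 * max a b := by
      rcases le_total a b with hab | hab
      · rw [max_eq_right hab]; linarith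
      · rw [max_eq_left hab]; linarith
    calc u.toReal ^ q ≤ (a + b) ^ q :=
          Real.rpow_le_rpow ENNReal.toReal_nonneg h1 hq
      _ ≤ (2 * max a b) ^ q := Real.rpow_le_rpow (by positivity) hmax hq
      _ = 2 ^ q * (max a b) ^ q := Real.mul_rpow (by norm_num) (le_max_of_le_left hap.le)
      _ ≤ 2 ^ q * (a ^ q + b ^ q) := by
          have : (max a b) ^ q ≤ a ^ q + b ^ q := by
            rcases le_total a b with hab | hab
            · rw [max_eq_right hab]
              nlinarith [Real.rpow_nonneg hap.le q, Real.rpow_pos_of_pos hap q]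
            · rw [max_eq_left hab]
              nlinarith [Real.rpow_nonneg hbp.le q, Real.rpow_pos_of_pos hbp q]
          nlinarith


/-- terms of moment sums over a shifted mesh -/
def iterm (ν : Measure ℝ) (Δ β q : ℝ) (j : ℤ) : ℝ :=
  mterm q (ν (Set.Icc ((j:ℝ) * Δ + β) (((j:ℝ) + 1) * Δ + β)))

lemma Dq1_eq_tsum_iterm (ν : Measure ℝ) (δ q : ℝ) :
    Dq1 ν δ q = ∑' j : ℤ, iterm ν δ 0 q j := by
  unfold Dq1 iterm mterm meshCube1
  simp only [add_zero]

lemma iterm_support {ν : Measure ℝ} {R : ℝ} (hb : ν {x | R < |x|} = 0)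
    {Δ : ℝ} (hΔ : 0 < Δ) (β q : ℝ) :
    ∀ j : ℤ, j ∉ Finset.Icc (⌊(-R - β) / Δ⌋ - 2) (⌈(R - β) / Δ⌉ + 1) →
      iterm ν Δ β q j = 0 := by
  intro j hj
  rw [Finset.mem_Icc, not_and_or, not_le, not_le] at hj
  have hsub : Set.Icc ((j:ℝ) * Δ + β) (((j:ℝ) + 1) * Δ + β) ⊆ {x | R < |x|} := by
    rcases hj with hj | hj
    · -- j small: interval entirely below -R
      intro x hx
      have hj' : (j:ℝ) + 1 ≤ ⌊(-R - β) / Δ⌋ - 1 := by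
        have : (j:ℤ) + 1 ≤ ⌊(-R - β) / Δ⌋ - 1 := by omega
        exact_mod_cast this
      have hfl : (⌊(-R - β) / Δ⌋ : ℝ) ≤ (-R - β) / Δ := Int.floor_le _
      have h2 : ((j:ℝ) + 1) * Δ ≤ ((-R - β) / Δ - 1) * Δ := by
        apply mul_le_mul_of_nonneg_right _ hΔ.le
        linarith
      have h3 : ((-R - β) / Δ - 1) * Δ = -R - β - Δ := by
        field_simp
      have hxle : x ≤ -R - Δ := by
        have := hx.2; linarith
      simp only [Set.mem_setOf_eq]
      calc R < -x := by linarith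
        _ ≤ |x| := neg_le_abs x
    · -- j big: interval entirely above R
      intro x hx
      have hj' : (⌈(R - β) / Δ⌉ : ℝ) + 2 ≤ (j:ℝ) := by
        have : (⌈(R - β) / Δ⌉ : ℤ) + 2 ≤ j := by omega
        exact_mod_cast this
      have hcl : (R - β) / Δ ≤ (⌈(R - β) / Δ⌉ : ℝ) := Int.le_ceil _
      have h2 : ((R - β) / Δ + 2) * Δ ≤ (j:ℝ) * Δ := by
        apply mul_le_mul_of_nonneg_right _ hΔ.le
        linarith
      have h3 : ((R - β) / Δ + 2) * Δ = R - β + 2 * Δ := by field_simp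
      have hxge : R + 2 * Δ ≤ x := by
        have := hx.1; linarith
      simp only [Set.mem_setOf_eq]
      calc R < x := by linarith
        _ ≤ |x| := le_abs_self x
  have : ν (Set.Icc ((j:ℝ) * Δ + β) (((j:ℝ) + 1) * Δ + β)) = 0 :=
    measure_mono_null hsub hb
  rw [iterm, this, mterm, if_pos rfl]

lemma iterm_summable {ν : Measure ℝ} {R : ℝ} (hb : ν {x | R < |x|} = 0)
    {Δ : ℝ} (hΔ : 0 < Δ) (β q : ℝ) : Summable (iterm ν Δ β q) :=
  summable_of_ne_finset_zero (iterm_support hb hΔ β q)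

lemma exists_meshCube1_pos (ν : Measure ℝ) [IsProbabilityMeasure ν] {δ : ℝ} (hδ : 0 < δ) :
    ∃ k : ℤ, ν (meshCube1 δ k) ≠ 0 := by
  by_contra hall
  push_neg at hall
  have huniv : (Set.univ : Set ℝ) ⊆ ⋃ k : ℤ, meshCube1 δ k := by
    intro x _
    refine Set.mem_iUnion.2 ⟨⌊x / δ⌋, ?_, ?_⟩
    · calc (⌊x / δ⌋ : ℝ) * δ ≤ (x / δ) * δ :=
          mul_le_mul_of_nonneg_right (Int.floor_le _) hδ.le
        _ = x := by field_simp
    · calc x = (x / δ) * δ := by field_simp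
        _ ≤ ((⌊x / δ⌋ : ℝ) + 1) * δ :=
          mul_le_mul_of_nonneg_right (Int.lt_floor_add_one _).le hδ.le
  have h1 : ν (Set.univ) = 0 := by
    refine le_antisymm ?_ (zero_le)
    calc ν Set.univ ≤ ν (⋃ k : ℤ, meshCube1 δ k) := measure_mono huniv
      _ ≤ ∑' k : ℤ, ν (meshCube1 δ k) := measure_iUnion_le _
      _ = 0 := by simp [hall]
  simp [measure_univ] at h1

lemma Dq1_pos {ν : Measure ℝ} [IsProbabilityMeasure ν] {R : ℝ}
    (hb : ν {x | R < |x|} = 0) {δ : ℝ} (hδ : 0 < δ) (q : ℝ) : 0 < Dq1 ν δ q := by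
  obtain ⟨k, hk⟩ := exists_meshCube1_pos ν hδ
  rw [Dq1_eq_tsum_iterm]
  have hkpos : 0 < iterm ν δ 0 q k := by
    rw [iterm]
    apply mterm_pos _ (measure_ne_top ν _)
    simpa [meshCube1] using hk
  calc (0:ℝ) < iterm ν δ 0 q k := hkpos
    _ ≤ ∑' j : ℤ, iterm ν δ 0 q j :=
      Summable.le_tsum (iterm_summable hb hδ 0 q) k (fun j _ => mterm_nonneg q _)


lemma affine_preimage_Icc_pos {r : ℝ} (hr : 0 < r) (t lo hi : ℝ) :
    (fun x => r * x + t) ⁻¹' Set.Icc lo hi = Set.Icc ((lo - t) / r) ((hi - t) / r) := by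
  ext x
  simp only [Set.mem_preimage, Set.mem_Icc]
  rw [div_le_iff₀ hr, le_div_iff₀ hr]
  constructor <;> rintro ⟨h1, h2⟩ <;> constructor <;> linarith

lemma affine_preimage_Icc_neg {r : ℝ} (hr : r < 0) (t lo hi : ℝ) :
    (fun x => r * x + t) ⁻¹' Set.Icc lo hi = Set.Icc ((hi - t) / r) ((lo - t) / r) := by
  ext x
  simp only [Set.mem_preimage, Set.mem_Icc]
  rw [div_le_iff_of_neg hr, le_div_iff_of_neg hr]
  constructor <;> rintro ⟨h1, h2⟩ <;> constructor <;> linarith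

lemma iterm_zero_eq (ν : Measure ℝ) (δ q : ℝ) (k : ℤ) :
    iterm ν δ 0 q k = mterm q (ν (meshCube1 δ k)) := by
  simp [iterm, meshCube1]

lemma Dq1_comparison {ν ν' : Measure ℝ} [IsProbabilityMeasure ν] [IsProbabilityMeasure ν']
    {R R' : ℝ} (hbν : ν {x | R < |x|} = 0) (hbν' : ν' {x | R' < |x|} = 0)
    {c r t : ℝ} (hc : 0 < c) (hr : r ≠ 0)
    (hle : ∀ A : Set ℝ, MeasurableSet A →
      ENNReal.ofReal c * ν' ((fun x => r * x + t) ⁻¹' A) ≤ ν A)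
    {q : ℝ} (hq : 0 ≤ q) {δ : ℝ} (hδ : 0 < δ) :
    Dq1 ν' (δ / |r|) q ≤ (2:ℝ) ^ (q + 1) / c ^ q * Dq1 ν δ q := by
  have hρ : 0 < |r| := abs_pos.2 hr
  set δ' := δ / |r| with hδ'def
  have hδ' : 0 < δ' := div_pos hδ hρ
  set β : ℝ := -t / r with hβ
  obtain ⟨σ, hσ⟩ : ∃ σ : ℤ ≃ ℤ, ∀ k : ℤ,
      (fun x => r * x + t) ⁻¹' (meshCube1 δ k) =
        Set.Icc ((σ k : ℝ) * δ' + β) (((σ k : ℝ) + 1) * δ' + β) := by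
    rcases hr.lt_or_gt with hneg | hpos
    · refine ⟨⟨fun k => -k - 1, fun k => -k - 1, fun k => by ring, fun k => by ring⟩,
        fun k => ?_⟩
      rw [meshCube1, affine_preimage_Icc_neg hneg]
      have hab : |r| = -r := abs_of_neg hneg
      have h1 : (((k:ℝ) + 1) * δ - t) / r = ((-k - 1 : ℤ) : ℝ) * δ' + β := by
        rw [hδ'def, hβ, hab, div_neg]
        push_cast
        ring
      have h2 : ((k:ℝ) * δ - t) / r = (((-k - 1 : ℤ) : ℝ) + 1) * δ' + β := by
        rw [hδ'def, hβ, hab, div_neg]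
        push_cast
        ring
      rw [h1, h2]
      rfl
    · refine ⟨Equiv.refl ℤ, fun k => ?_⟩
      rw [meshCube1, affine_preimage_Icc_pos hpos]
      have hab : |r| = r := abs_of_pos hpos
      have h1 : ((k:ℝ) * δ - t) / r = ((Equiv.refl ℤ k : ℤ) : ℝ) * δ' + β := by
        rw [hδ'def, hβ, hab]
        simp only [Equiv.refl_apply]
        ring
      have h2 : (((k:ℝ) + 1) * δ - t) / r = (((Equiv.refl ℤ k : ℤ) : ℝ) + 1) * δ' + β := by
        rw [hδ'def, hβ, hab]
        simp only [Equiv.refl_apply]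
        ring
      rw [h1, h2]
  have hf : Summable (iterm ν' δ' 0 q) := iterm_summable hbν' hδ' 0 q
  have hg : Summable (iterm ν δ 0 q) := iterm_summable hbν hδ 0 q
  have hh : Summable (iterm ν' δ' β q) := iterm_summable hbν' hδ' β q
  -- Step B : relate the shifted intervals to the δ-mesh through the affine map
  have hB : ∀ k : ℤ, iterm ν' δ' β q (σ k) ≤ (1 / c) ^ q * iterm ν δ 0 q k := by
    intro k
    have hpre := hle (meshCube1 δ k) measurableSet_Icc
    rw [hσ k] at hpre
    rw [iterm_zero_eq, iterm]
    exact mterm_le_of_smul hq hc (measure_ne_top ν _) hpre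
  have hSum1 : ∑' j : ℤ, iterm ν' δ' β q j ≤ (1 / c) ^ q * ∑' k : ℤ, iterm ν δ 0 q k := by
    calc ∑' j : ℤ, iterm ν' δ' β q j = ∑' k : ℤ, iterm ν' δ' β q (σ k) :=
          (Equiv.tsum_eq σ _).symm
      _ ≤ ∑' k : ℤ, (1 / c) ^ q * iterm ν δ 0 q k := by
          refine Summable.tsum_le_tsum hB ?_ (hg.mul_left _)
          exact (σ.summable_iff (f := iterm ν' δ' β q)).2 hh
      _ = (1 / c) ^ q * ∑' k : ℤ, iterm ν δ 0 q k := tsum_mul_left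
  -- Step C : covering of the δ'-mesh cubes by two consecutive shifted intervals
  set j0 : ℤ := ⌊-β / δ'⌋ with hj0
  have hC : ∀ m : ℤ, iterm ν' δ' 0 q m ≤
      (2:ℝ) ^ q * (iterm ν' δ' β q (m + j0) + iterm ν' δ' β q (m + (j0 + 1))) := by
    intro m
    have hfl : (j0 : ℝ) ≤ -β / δ' := Int.floor_le _
    have hfl2 : -β / δ' < (j0 : ℝ) + 1 := Int.lt_floor_add_one _
    have hb1 : (j0 : ℝ) * δ' + β ≤ 0 := by
      have := mul_le_mul_of_nonneg_right hfl hδ'.le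
      have h2 : -β / δ' * δ' = -β := by field_simp
      linarith
    have hb2 : 0 ≤ ((j0 : ℝ) + 1) * δ' + β := by
      have := mul_le_mul_of_nonneg_right hfl2.le hδ'.le
      have h2 : -β / δ' * δ' = -β := by field_simp
      linarith
    have hincl : Set.Icc ((m:ℝ) * δ' + 0) (((m:ℝ) + 1) * δ' + 0) ⊆
        Set.Icc (((m + j0 : ℤ):ℝ) * δ' + β) ((((m + j0 : ℤ):ℝ) + 1) * δ' + β) ∪
        Set.Icc (((m + (j0 + 1) : ℤ):ℝ) * δ' + β) ((((m + (j0 + 1) : ℤ):ℝ) + 1) * δ' + β) := by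
      intro x hx
      simp only [Set.mem_Icc, add_zero] at hx
      push_cast
      by_cases hxc : x ≤ ((m:ℝ) + (j0:ℝ) + 1) * δ' + β
      · left
        simp only [Set.mem_Icc]
        constructor
        · nlinarith [hx.1]
        · nlinarith [hxc]
      · right
        simp only [Set.mem_Icc]
        push_neg at hxc
        constructor
        · nlinarith [hxc.le]
        · nlinarith [hx.2]
    have hmeas : ν' (Set.Icc ((m:ℝ) * δ' + 0) (((m:ℝ) + 1) * δ' + 0)) ≤
        ν' (Set.Icc (((m + j0 : ℤ):ℝ) * δ' + β) ((((m + j0 : ℤ):ℝ) + 1) * δ' + β)) +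
        ν' (Set.Icc (((m + (j0 + 1) : ℤ):ℝ) * δ' + β) ((((m + (j0 + 1) : ℤ):ℝ) + 1) * δ' + β)) :=
      le_trans (measure_mono hincl) (measure_union_le _ _)
    exact mterm_add_le hq (measure_ne_top ν' _) (measure_ne_top ν' _) hmeas
  -- Step D : put everything together
  have hshift1 : Summable (fun m : ℤ => iterm ν' δ' β q (m + j0)) :=
    ((Equiv.addRight j0).summable_iff (f := iterm ν' δ' β q)).2 hh
  have hshift2 : Summable (fun m : ℤ => iterm ν' δ' β q (m + (j0 + 1))) :=
    ((Equiv.addRight (j0 + 1)).summable_iff (f := iterm ν' δ' β q)).2 hh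
  have hts1 : ∑' m : ℤ, iterm ν' δ' β q (m + j0) = ∑' j : ℤ, iterm ν' δ' β q j :=
    Equiv.tsum_eq (Equiv.addRight j0) _
  have hts2 : ∑' m : ℤ, iterm ν' δ' β q (m + (j0 + 1)) = ∑' j : ℤ, iterm ν' δ' β q j :=
    Equiv.tsum_eq (Equiv.addRight (j0 + 1)) _
  have h2q : (0:ℝ) < 2 ^ q := Real.rpow_pos_of_pos two_pos q
  calc Dq1 ν' δ' q = ∑' m : ℤ, iterm ν' δ' 0 q m := Dq1_eq_tsum_iterm ν' δ' q
    _ ≤ ∑' m : ℤ, (2:ℝ) ^ q *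
          (iterm ν' δ' β q (m + j0) + iterm ν' δ' β q (m + (j0 + 1))) := by
        refine Summable.tsum_le_tsum hC hf ?_
        exact (hshift1.add hshift2).mul_left _
    _ = (2:ℝ) ^ q * (∑' j : ℤ, iterm ν' δ' β q j + ∑' j : ℤ, iterm ν' δ' β q j) := by
        rw [tsum_mul_left, Summable.tsum_add hshift1 hshift2, hts1, hts2]
    _ ≤ (2:ℝ) ^ q * (((1 / c) ^ q * ∑' k : ℤ, iterm ν δ 0 q k) +
          ((1 / c) ^ q * ∑' k : ℤ, iterm ν δ 0 q k)) := by
        have := hSum1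
        nlinarith [hSum1, h2q]
    _ = (2:ℝ) ^ (q + 1) / c ^ q * ∑' k : ℤ, iterm ν δ 0 q k := by
        rw [Real.rpow_add two_pos, Real.rpow_one]
        rw [one_div, Real.inv_rpow hc.le]
        ring
    _ = (2:ℝ) ^ (q + 1) / c ^ q * Dq1 ν δ q := by rw [← Dq1_eq_tsum_iterm]


lemma hasLq1_mono {ν ν' : Measure ℝ} [IsProbabilityMeasure ν] [IsProbabilityMeasure ν']
    {R R' : ℝ} (hbν : ν {x | R < |x|} = 0) (hbν' : ν' {x | R' < |x|} = 0)
    {c r t : ℝ} (hc : 0 < c) (hr : r ≠ 0)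
    (hle : ∀ A : Set ℝ, MeasurableSet A →
      ENNReal.ofReal c * ν' ((fun x => r * x + t) ⁻¹' A) ≤ ν A)
    {q τ τ' : ℝ} (hq : 0 ≤ q)
    (h1 : HasLq1 ν q τ) (h2 : HasLq1 ν' q τ') : τ' ≤ τ := by
  have hρ : 0 < |r| := abs_pos.2 hr
  set l : Filter ℝ := nhdsWithin 0 (Set.Ioi 0) with hl
  set C : ℝ := (2:ℝ) ^ (q + 1) / c ^ q with hCdef
  have hC : 0 < C := by
    rw [hCdef]
    positivity
  -- the rescaling map preserves the filter
  have hmap : Tendsto (fun δ : ℝ => δ / |r|) l l := by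
    rw [hl, tendsto_nhdsWithin_iff]
    constructor
    · have := (tendsto_id.mono_left (nhdsWithin_le_nhds :
        nhdsWithin (0:ℝ) (Set.Ioi 0) ≤ nhds 0)).div_const |r|
      simpa using this
    · filter_upwards [self_mem_nhdsWithin] with δ hδ
      exact div_pos hδ hρ
  have hlog : Tendsto (fun δ : ℝ => -Real.log δ) l atTop :=
    tendsto_neg_atBot_atTop.comp Real.tendsto_log_nhdsGT_zero
  have hinv : Tendsto (fun δ : ℝ => (-Real.log δ)⁻¹) l (nhds 0) :=
    hlog.inv_tendsto_atTop
  have hev : ∀ᶠ δ : ℝ in l, 0 < δ ∧ δ < 1 ∧ δ < |r| := by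
    have h1' : ∀ᶠ δ : ℝ in nhds (0:ℝ), δ < min 1 |r| :=
      Filter.Tendsto.eventually_lt_const (by simp [hρ]) tendsto_id
    filter_upwards [self_mem_nhdsWithin, h1'.filter_mono nhdsWithin_le_nhds] with δ hδ hδ'
    exact ⟨hδ, lt_of_lt_of_le hδ' (min_le_left _ _), lt_of_lt_of_le hδ' (min_le_right _ _)⟩
  -- eventual inequality
  have h_le : (fun δ : ℝ => Real.log (Dq1 ν' (δ / |r|) q) / (-Real.log δ)) ≤ᶠ[l]
      (fun δ : ℝ => Real.log C * (-Real.log δ)⁻¹ +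
        Real.log (Dq1 ν δ q) / (-Real.log δ)) := by
    filter_upwards [hev] with δ ⟨hδ, hδ1, hδr⟩
    have hpos' : 0 < Dq1 ν' (δ / |r|) q := Dq1_pos hbν' (div_pos hδ hρ) q
    have hpos : 0 < Dq1 ν δ q := Dq1_pos hbν hδ q
    have hcomp : Dq1 ν' (δ / |r|) q ≤ C * Dq1 ν δ q :=
      Dq1_comparison hbν hbν' hc hr hle hq hδ
    have hlogle : Real.log (Dq1 ν' (δ / |r|) q) ≤ Real.log C + Real.log (Dq1 ν δ q) := by
      calc Real.log (Dq1 ν' (δ / |r|) q) ≤ Real.log (C * Dq1 ν δ q) :=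
            Real.log_le_log hpos' hcomp
        _ = Real.log C + Real.log (Dq1 ν δ q) := Real.log_mul hC.ne' hpos.ne'
    have hld : 0 < -Real.log δ := by
      have := Real.log_neg hδ hδ1
      linarith
    calc Real.log (Dq1 ν' (δ / |r|) q) / (-Real.log δ)
        ≤ (Real.log C + Real.log (Dq1 ν δ q)) / (-Real.log δ) :=
          div_le_div_of_nonneg_right hlogle hld.le
      _ = Real.log C * (-Real.log δ)⁻¹ + Real.log (Dq1 ν δ q) / (-Real.log δ) := by
          rw [add_div, div_eq_mul_inv]
  -- tendsto of the left side
  have hratio : Tendsto (fun δ : ℝ => (-Real.log (δ / |r|)) / (-Real.log δ)) l (nhds 1) := by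
    have heq : (fun δ : ℝ => (-Real.log (δ / |r|)) / (-Real.log δ)) =ᶠ[l]
        (fun δ : ℝ => 1 + Real.log |r| * (-Real.log δ)⁻¹) := by
      filter_upwards [hev] with δ ⟨hδ, hδ1, hδr⟩
      have hld : -Real.log δ ≠ 0 := by
        have := Real.log_neg hδ hδ1
        intro h; apply this.ne; linarith
      rw [Real.log_div hδ.ne' hρ.ne']
      rw [show -(Real.log δ - Real.log |r|) = -Real.log δ + Real.log |r| by ring]
      rw [add_div, div_self hld, div_eq_mul_inv]
    have : Tendsto (fun δ : ℝ => 1 + Real.log |r| * (-Real.log δ)⁻¹) l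
        (nhds (1 + Real.log |r| * 0)) :=
      tendsto_const_nhds.add (tendsto_const_nhds.mul hinv)
    rw [mul_zero, add_zero] at this
    exact Tendsto.congr' heq.symm this
  have hA : Tendsto (fun δ : ℝ => Real.log (Dq1 ν' (δ / |r|) q) / (-Real.log δ)) l
      (nhds τ') := by
    have hprod : Tendsto (fun δ : ℝ =>
        (Real.log (Dq1 ν' (δ / |r|) q) / (-Real.log (δ / |r|))) *
          ((-Real.log (δ / |r|)) / (-Real.log δ))) l (nhds (τ' * 1)) :=
      (h2.comp hmap).mul hratio
    rw [mul_one] at hprod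
    refine Tendsto.congr' ?_ hprod
    filter_upwards [hev] with δ ⟨hδ, hδ1, hδr⟩
    have hδρ : δ / |r| < 1 := (div_lt_one hρ).2 hδr
    have hlogne : -Real.log (δ / |r|) ≠ 0 := by
      have := Real.log_neg (div_pos hδ hρ) hδρ
      intro h; apply this.ne; linarith
    rw [div_mul_div_comm, mul_comm (Real.log (Dq1 ν' (δ / |r|) q)) _,
      mul_div_mul_left _ _ hlogne]
  have hB : Tendsto (fun δ : ℝ => Real.log C * (-Real.log δ)⁻¹ +
      Real.log (Dq1 ν δ q) / (-Real.log δ)) l (nhds (Real.log C * 0 + τ)) :=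
    (tendsto_const_nhds.mul hinv).add h1
  rw [mul_zero, zero_add] at hB
  exact le_of_tendsto_of_tendsto hA hB h_le

end LqGIFS

end Aux14

noncomputable section Aux14B

open scoped ENNReal

namespace LqGIFS

namespace BoxLikeGIFS

variable {V E : Type} [Fintype V] [Fintype E] [Nonempty V]

lemma map_eq_of_diag (S : BoxLikeGIFS V E) (e : E) (hd : S.diag e = true) :
    S.map e = fun z : ℝ × ℝ =>
      (S.sa e * S.a e * z.1 + (S.trans e).1, S.sb e * S.b e * z.2 + (S.trans e).2) := by
  funext z
  unfold BoxLikeGIFS.map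
  rw [if_pos hd]

lemma map_eq_of_antidiag (S : BoxLikeGIFS V E) (e : E) (hd : S.diag e = false) :
    S.map e = fun z : ℝ × ℝ =>
      (S.sa e * S.a e * z.2 + (S.trans e).1, S.sb e * S.b e * z.1 + (S.trans e).2) := by
  funext z
  unfold BoxLikeGIFS.map
  rw [if_neg (by simp [hd])]

lemma map_measurable (S : BoxLikeGIFS V E) (e : E) : Measurable (S.map e) := by
  cases hd : S.diag e
  · rw [S.map_eq_of_antidiag e hd]; fun_prop
  · rw [S.map_eq_of_diag e hd]; fun_prop

lemma support_bound (S : BoxLikeGIFS V E) (p : E → ℝ) (μ : V → Measure (ℝ × ℝ))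
    (hp : S.IsWeights p) (hμ : S.IsGDMeasure p μ) :
    ∃ R : ℝ, 0 < R ∧ ∀ v, μ v {z : ℝ × ℝ | R < |z.1| ∨ R < |z.2|} = 0 := by
  haveI : ∀ v, IsProbabilityMeasure (μ v) := hμ.1
  obtain ⟨e0, -⟩ := S.edge_exists (Classical.arbitrary V)
  haveI : Nonempty E := ⟨e0⟩
  set r : ℝ := Finset.univ.sup' Finset.univ_nonempty (fun e => max (S.a e) (S.b e)) with hrdef
  have hra : ∀ e, S.a e ≤ r := fun e =>
    le_trans (le_max_left _ _)
      (Finset.le_sup' (fun e => max (S.a e) (S.b e)) (Finset.mem_univ e))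
  have hrb : ∀ e, S.b e ≤ r := fun e =>
    le_trans (le_max_right _ _)
      (Finset.le_sup' (fun e => max (S.a e) (S.b e)) (Finset.mem_univ e))
  have hr0 : 0 < r := lt_of_lt_of_le (S.a_mem e0).1 (hra e0)
  have hr1 : r < 1 := by
    rw [hrdef, Finset.sup'_lt_iff]
    intro e _
    exact max_lt (S.a_mem e).2 (S.b_mem e).2
  set T : ℝ := Finset.univ.sup' Finset.univ_nonempty
      (fun e => max |(S.trans e).1| |(S.trans e).2|) with hTdef
  have hT1 : ∀ e, |(S.trans e).1| ≤ T := fun e =>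
    le_trans (le_max_left _ _)
      (Finset.le_sup' (fun e => max |(S.trans e).1| |(S.trans e).2|) (Finset.mem_univ e))
  have hT2 : ∀ e, |(S.trans e).2| ≤ T := fun e =>
    le_trans (le_max_right _ _)
      (Finset.le_sup' (fun e => max |(S.trans e).1| |(S.trans e).2|) (Finset.mem_univ e))
  have hT0 : 0 ≤ T := le_trans (abs_nonneg _) (hT1 e0)
  set B : ℝ := T / (1 - r) with hBdef
  have hB0 : 0 ≤ B := div_nonneg hT0 (by linarith)
  have h1rne : (1:ℝ) - r ≠ 0 := by linarith
  have hBr : r * B + T = B := by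
    rw [hBdef]
    field_simp
    ring
  set Rn : ℕ → ℝ := fun n => B + (1 / r) ^ n with hRndef
  have hRn0 : ∀ n, 0 < Rn n := fun n => by
    have : (0:ℝ) < (1 / r) ^ n := pow_pos (by positivity) n
    simp only [hRndef]; linarith
  have hRnmono : Monotone Rn := by
    intro n m hnm
    simp only [hRndef]
    have h1r : (1:ℝ) ≤ 1 / r := one_le_one_div hr0 hr1.le
    have := pow_le_pow_right₀ h1r hnm
    linarith
  -- the sets
  set K : ℕ → Set (ℝ × ℝ) := fun n => {z : ℝ × ℝ | |z.1| ≤ Rn n ∧ |z.2| ≤ Rn n} with hKdef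
  have hKmeas : ∀ n, MeasurableSet (K n) := by
    intro n
    apply MeasurableSet.inter
    · exact measurableSet_le (measurable_fst.abs) measurable_const
    · exact measurableSet_le (measurable_snd.abs) measurable_const
  -- contraction step on the sets
  have habs_sa : ∀ e, |S.sa e| = 1 := by
    intro e
    rcases S.sa_mem e with h | h <;> rw [h] <;> norm_num
  have habs_sb : ∀ e, |S.sb e| = 1 := by
    intro e
    rcases S.sb_mem e with h | h <;> rw [h] <;> norm_num
  have hcoord : ∀ (x t' : ℝ) (s' a' : ℝ), |s'| = 1 → 0 < a' → a' ≤ r → |t'| ≤ T →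
      ∀ n, |x| ≤ Rn (n + 1) → |s' * a' * x + t'| ≤ Rn n := by
    intro x t' s' a' hs' ha' har ht' n hx
    have h1 : |s' * a' * x + t'| ≤ |s' * a' * x| + |t'| := abs_add_le _ _
    have h2 : |s' * a' * x| = a' * |x| := by
      rw [abs_mul, abs_mul, hs', abs_of_pos ha', one_mul]
    have h3 : a' * |x| ≤ r * Rn (n + 1) := by
      apply mul_le_mul har hx (abs_nonneg x) (by linarith)
    have h4 : r * Rn (n + 1) + T = Rn n := by
      simp only [hRndef]
      rw [mul_add, pow_succ]
      have : r * ((1 / r) ^ n * (1 / r)) = (1 / r) ^ n := by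
        field_simp
      rw [this]
      linarith [hBr]
    linarith
  have hmapK : ∀ e n, (S.map e) ⁻¹' (K n)ᶜ ⊆ (K (n + 1))ᶜ := by
    intro e n
    rw [Set.preimage_compl, Set.compl_subset_compl]
    intro z hz
    simp only [hKdef, Set.mem_setOf_eq, Set.mem_preimage] at hz ⊢
    cases hd : S.diag e
    · rw [S.map_eq_of_antidiag e hd]
      constructor
      · exact hcoord z.2 _ _ _ (habs_sa e) (S.a_mem e).1 (hra e) (hT1 e) n hz.2
      · exact hcoord z.1 _ _ _ (habs_sb e) (S.b_mem e).1 (hrb e) (hT2 e) n hz.1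
    · rw [S.map_eq_of_diag e hd]
      constructor
      · exact hcoord z.1 _ _ _ (habs_sa e) (S.a_mem e).1 (hra e) (hT1 e) n hz.1
      · exact hcoord z.2 _ _ _ (habs_sb e) (S.b_mem e).1 (hrb e) (hT2 e) n hz.2
  -- the iteration
  set M : ℕ → ℝ≥0∞ := fun n => ∑ u : V, μ u ((K n)ᶜ) with hMdef
  have hle_M : ∀ v n, μ v ((K n)ᶜ) ≤ M n := by
    intro v n
    simp only [hMdef]
    exact Finset.single_le_sum (f := fun u => μ u ((K n)ᶜ)) (fun u _ => zero_le)
      (Finset.mem_univ v)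
  have hstep : ∀ N v n, μ v ((K n)ᶜ) ≤ M (n + N) := by
    intro N
    induction N with
    | zero => intro v n; simpa using hle_M v n
    | succ N ih =>
      intro v n
      have hrel := hμ.2 v
      have happ : μ v ((K n)ᶜ) = ∑ e : E, (if S.init e = v then
          ENNReal.ofReal (p e) * ((μ (S.term e)).map (S.map e)) ((K n)ᶜ) else 0) := by
        conv_lhs => rw [hrel]
        rw [Measure.finset_sum_apply]
        congr 1
        ext e
        split
        · rw [Measure.smul_apply, smul_eq_mul]
        · rfl
      rw [happ]
      have hterm : ∀ e : E, (if S.init e = v then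
          ENNReal.ofReal (p e) * ((μ (S.term e)).map (S.map e)) ((K n)ᶜ) else 0) ≤
          (if S.init e = v then ENNReal.ofReal (p e) else 0) * M (n + 1 + N) := by
        intro e
        split
        · rw [Measure.map_apply (S.map_measurable e) (hKmeas n).compl]
          have h1 : μ (S.term e) ((S.map e) ⁻¹' (K n)ᶜ) ≤ μ (S.term e) ((K (n+1))ᶜ) :=
            measure_mono (hmapK e n)
          have h2 : μ (S.term e) ((K (n+1))ᶜ) ≤ M (n + 1 + N) := ih (S.term e) (n + 1)
          exact mul_le_mul_right (le_trans h1 h2) _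
        · simp
      calc (∑ e : E, if S.init e = v then
            ENNReal.ofReal (p e) * ((μ (S.term e)).map (S.map e)) ((K n)ᶜ) else 0)
          ≤ ∑ e : E, (if S.init e = v then ENNReal.ofReal (p e) else 0) * M (n + 1 + N) :=
            Finset.sum_le_sum (fun e _ => hterm e)
        _ = (∑ e : E, if S.init e = v then ENNReal.ofReal (p e) else 0) * M (n + 1 + N) := by
            rw [Finset.sum_mul]
        _ = M (n + (N + 1)) := by
            have hsum : (∑ e : E, if S.init e = v then ENNReal.ofReal (p e) else 0) = 1 := by
              have := hp.2 v
              calc (∑ e : E, if S.init e = v then ENNReal.ofReal (p e) else 0)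
                  = ∑ e : E, ENNReal.ofReal (if S.init e = v then p e else 0) := by
                    congr 1; ext e; split <;> simp
                _ = ENNReal.ofReal (∑ e : E, if S.init e = v then p e else 0) := by
                    rw [ENNReal.ofReal_sum_of_nonneg]
                    intro e _
                    split
                    · exact (hp.1 e).le
                    · exact le_rfl
                _ = 1 := by rw [this]; norm_num
            rw [hsum, one_mul]
            congr 1
            omega
  -- measure of complements tends to zero
  have hinter : (⋂ n, (K n)ᶜ) = ∅ := by
    rw [Set.eq_empty_iff_forall_notMem]
    intro z hz
    obtain ⟨n, hn⟩ := pow_unbounded_of_one_lt (max |z.1| |z.2| - B)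
      ((one_lt_one_div hr0 hr1))
    have hzK : z ∈ K n := by
      simp only [hKdef, Set.mem_setOf_eq]
      constructor
      · have := le_max_left |z.1| |z.2|
        simp only [hRndef]; linarith
      · have := le_max_right |z.1| |z.2|
        simp only [hRndef]; linarith
    exact (Set.mem_iInter.1 hz n) hzK
  have htendsto : ∀ u : V, Filter.Tendsto (fun n => μ u ((K n)ᶜ)) Filter.atTop (nhds 0) := by
    intro u
    have h1 : Filter.Tendsto (⇑(μ u) ∘ (fun n => (K n)ᶜ)) Filter.atTop
        (nhds (μ u (⋂ n, (K n)ᶜ))) := by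
      apply tendsto_measure_iInter_atTop
      · exact fun n => ((hKmeas n).compl).nullMeasurableSet
      · intro n m hnm
        apply Set.compl_subset_compl.2
        intro z hz
        simp only [hKdef, Set.mem_setOf_eq] at hz ⊢
        exact ⟨le_trans hz.1 (hRnmono hnm), le_trans hz.2 (hRnmono hnm)⟩
      · exact ⟨0, measure_ne_top _ _⟩
    rw [hinter] at h1
    simpa [Function.comp_def] using h1
  have hMtendsto : Filter.Tendsto M Filter.atTop (nhds 0) := by
    have : Filter.Tendsto (fun n => ∑ u : V, μ u ((K n)ᶜ)) Filter.atTop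
        (nhds (∑ u : V, (0:ℝ≥0∞))) :=
      tendsto_finset_sum _ (fun u _ => htendsto u)
    simpa using this
  have hzero : ∀ v, μ v ((K 0)ᶜ) = 0 := by
    intro v
    have hle0 : μ v ((K 0)ᶜ) ≤ 0 := by
      apply ge_of_tendsto' hMtendsto
      intro N
      simpa using hstep N v 0
    exact le_antisymm hle0 (zero_le)
  refine ⟨Rn 0, hRn0 0, fun v => ?_⟩
  have : {z : ℝ × ℝ | Rn 0 < |z.1| ∨ Rn 0 < |z.2|} = (K 0)ᶜ := by
    ext z
    simp only [hKdef, Set.mem_setOf_eq, Set.mem_compl_iff, not_and_or, not_le]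
  rw [this]
  exact hzero v

end BoxLikeGIFS

end LqGIFS

end Aux14B

noncomputable section Aux14C

open scoped ENNReal

namespace LqGIFS

namespace BoxLikeGIFS

variable {V E : Type} [Fintype V] [Fintype E] [Nonempty V]

lemma single_term_le (S : BoxLikeGIFS V E) (p : E → ℝ) (μ : V → Measure (ℝ × ℝ))
    (hμ : S.IsGDMeasure p μ) (e : E) (A : Set (ℝ × ℝ)) (hA : MeasurableSet A) :
    ENNReal.ofReal (p e) * μ (S.term e) ((S.map e) ⁻¹' A) ≤ μ (S.init e) A := by
  conv_rhs => rw [hμ.2 (S.init e)]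
  rw [Measure.finset_sum_apply]
  have hterm : ENNReal.ofReal (p e) * μ (S.term e) ((S.map e) ⁻¹' A) =
      (if S.init e = S.init e then
        (ENNReal.ofReal (p e) • ((μ (S.term e)).map (S.map e))) else 0) A := by
    rw [if_pos rfl, Measure.smul_apply, smul_eq_mul,
      Measure.map_apply (S.map_measurable e) hA]
  rw [hterm]
  exact Finset.single_le_sum (f := fun e' => (if S.init e' = S.init e then
      (ENNReal.ofReal (p e') • ((μ (S.term e')).map (S.map e'))) else 0) A)
    (fun e' _ => zero_le) (Finset.mem_univ e)

lemma edge_tau_le (S : BoxLikeGIFS V E) (p : E → ℝ) (μ : V → Measure (ℝ × ℝ))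
    (hp : S.IsWeights p) (hμ : S.IsGDMeasure p μ)
    {q : ℝ} (hq : 0 ≤ q) (τx τy : V → ℝ)
    (hτx : ∀ v, HasLq1 ((μ v).map Prod.fst) q (τx v))
    (hτy : ∀ v, HasLq1 ((μ v).map Prod.snd) q (τy v)) (e : E) :
    (if S.diag e then τx (S.term e) else τy (S.term e)) ≤ τx (S.init e) ∧
    (if S.diag e then τy (S.term e) else τx (S.term e)) ≤ τy (S.init e) := by
  haveI hPMi : IsProbabilityMeasure (μ (S.init e)) := hμ.1 _
  haveI hPMt : IsProbabilityMeasure (μ (S.term e)) := hμ.1 _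
  haveI : IsProbabilityMeasure ((μ (S.init e)).map Prod.fst) :=
    Measure.isProbabilityMeasure_map measurable_fst.aemeasurable
  haveI : IsProbabilityMeasure ((μ (S.init e)).map Prod.snd) :=
    Measure.isProbabilityMeasure_map measurable_snd.aemeasurable
  haveI : IsProbabilityMeasure ((μ (S.term e)).map Prod.fst) :=
    Measure.isProbabilityMeasure_map measurable_fst.aemeasurable
  haveI : IsProbabilityMeasure ((μ (S.term e)).map Prod.snd) :=
    Measure.isProbabilityMeasure_map measurable_snd.aemeasurable
  obtain ⟨R, hR0, hRb⟩ := S.support_bound p μ hp hμ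
  have hAbs : MeasurableSet {x : ℝ | R < |x|} :=
    measurableSet_lt measurable_const measurable_id.abs
  have hbfst : ∀ v, ((μ v).map Prod.fst) {x : ℝ | R < |x|} = 0 := by
    intro v
    rw [Measure.map_apply measurable_fst hAbs]
    exact measure_mono_null (fun z hz => Or.inl hz) (hRb v)
  have hbsnd : ∀ v, ((μ v).map Prod.snd) {x : ℝ | R < |x|} = 0 := by
    intro v
    rw [Measure.map_apply measurable_snd hAbs]
    exact measure_mono_null (fun z hz => Or.inr hz) (hRb v)
  have hpe : 0 < p e := hp.1 e
  have hsa : S.sa e ≠ 0 := by rcases S.sa_mem e with h | h <;> rw [h] <;> norm_num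
  have hsb : S.sb e ≠ 0 := by rcases S.sb_mem e with h | h <;> rw [h] <;> norm_num
  have hra : S.sa e * S.a e ≠ 0 := mul_ne_zero hsa (S.a_mem e).1.ne'
  have hrb : S.sb e * S.b e ≠ 0 := mul_ne_zero hsb (S.b_mem e).1.ne'
  have key : ∀ (P1 P2 : ℝ × ℝ → ℝ), Measurable P1 → Measurable P2 →
      ∀ (rr tt : ℝ), (∀ z, P1 (S.map e z) = rr * P2 z + tt) →
      ∀ A : Set ℝ, MeasurableSet A →
        ENNReal.ofReal (p e) * ((μ (S.term e)).map P2) ((fun x => rr * x + tt) ⁻¹' A) ≤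
          ((μ (S.init e)).map P1) A := by
    intro P1 P2 hP1 hP2 rr tt hcomp A hA
    have hAff : Measurable (fun x : ℝ => rr * x + tt) := by fun_prop
    rw [Measure.map_apply hP1 hA, Measure.map_apply hP2 (hAff hA)]
    have hpre : (S.map e) ⁻¹' (P1 ⁻¹' A) = P2 ⁻¹' ((fun x => rr * x + tt) ⁻¹' A) := by
      ext z
      simp only [Set.mem_preimage, hcomp z]
    rw [← hpre]
    exact S.single_term_le p μ hμ e (P1 ⁻¹' A) (hP1 hA)
  cases hd : S.diag e
  · -- anti-diagonal
    have hcomp1 : ∀ z : ℝ × ℝ, Prod.fst (S.map e z) = (S.sa e * S.a e) * z.2 + (S.trans e).1 := by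
      intro z; rw [S.map_eq_of_antidiag e hd]
    have hcomp2 : ∀ z : ℝ × ℝ, Prod.snd (S.map e z) = (S.sb e * S.b e) * z.1 + (S.trans e).2 := by
      intro z; rw [S.map_eq_of_antidiag e hd]
    have h1 : τy (S.term e) ≤ τx (S.init e) :=
      hasLq1_mono (hbfst (S.init e)) (hbsnd (S.term e)) hpe hra
        (key Prod.fst Prod.snd measurable_fst measurable_snd _ _ hcomp1) hq
        (hτx (S.init e)) (hτy (S.term e))
    have h2 : τx (S.term e) ≤ τy (S.init e) :=
      hasLq1_mono (hbsnd (S.init e)) (hbfst (S.term e)) hpe hrb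
        (key Prod.snd Prod.fst measurable_snd measurable_fst _ _ hcomp2) hq
        (hτy (S.init e)) (hτx (S.term e))
    simp only [Bool.false_eq_true, if_false]
    exact ⟨h1, h2⟩
  · -- diagonal
    have hcomp1 : ∀ z : ℝ × ℝ, Prod.fst (S.map e z) = (S.sa e * S.a e) * z.1 + (S.trans e).1 := by
      intro z; rw [S.map_eq_of_diag e hd]
    have hcomp2 : ∀ z : ℝ × ℝ, Prod.snd (S.map e z) = (S.sb e * S.b e) * z.2 + (S.trans e).2 := by
      intro z; rw [S.map_eq_of_diag e hd]
    have h1 : τx (S.term e) ≤ τx (S.init e) :=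
      hasLq1_mono (hbfst (S.init e)) (hbfst (S.term e)) hpe hra
        (key Prod.fst Prod.fst measurable_fst measurable_fst _ _ hcomp1) hq
        (hτx (S.init e)) (hτx (S.term e))
    have h2 : τy (S.term e) ≤ τy (S.init e) :=
      hasLq1_mono (hbsnd (S.init e)) (hbsnd (S.term e)) hpe hrb
        (key Prod.snd Prod.snd measurable_snd measurable_snd _ _ hcomp2) hq
        (hτy (S.init e)) (hτy (S.term e))
    simp only [if_true]
    exact ⟨h1, h2⟩

lemma tau_coherence (S : BoxLikeGIFS V E) (hSC : S.StronglyConnected)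
    (p : E → ℝ) (μ : V → Measure (ℝ × ℝ))
    (hp : S.IsWeights p) (hμ : S.IsGDMeasure p μ)
    {q : ℝ} (hq : 0 ≤ q) (τx τy : V → ℝ)
    (hτx : ∀ v, HasLq1 ((μ v).map Prod.fst) q (τx v))
    (hτy : ∀ v, HasLq1 ((μ v).map Prod.snd) q (τy v)) (e : E) :
    τx (S.init e) = (if S.diag e then τx (S.term e) else τy (S.term e)) ∧
    τy (S.init e) = (if S.diag e then τy (S.term e) else τx (S.term e)) := by
  set F : V → Bool → ℝ := fun v b => if b then τy v else τx v with hF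
  have hedge : ∀ (e' : E) (b : Bool), F (S.term e') (xor b (!S.diag e')) ≤ F (S.init e') b := by
    intro e' b
    obtain ⟨h1, h2⟩ := S.edge_tau_le p μ hp hμ hq τx τy hτx hτy e'
    cases b <;> cases hd : S.diag e' <;>
      simp only [hd, if_true, if_false, Bool.false_eq_true, Bool.not_true, Bool.not_false,
        Bool.xor_false, Bool.xor_true, Bool.false_xor, Bool.true_xor, Bool.not_true] at h1 h2 ⊢ <;>
      simp only [hF] <;> simp <;> assumption
  have hpath : ∀ u v : V,
      Relation.TransGen (fun u u' : V => ∃ e', S.init e' = u ∧ S.term e' = u') u v →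
      ∃ π : Bool, ∀ b, F v (xor b π) ≤ F u b := by
    intro u v h
    induction h with
    | single hstep =>
      obtain ⟨e', he1, he2⟩ := hstep
      exact ⟨!S.diag e', fun b => by rw [← he1, ← he2]; exact hedge e' b⟩
    | tail huv hstep ih =>
      obtain ⟨π1, h1⟩ := ih
      obtain ⟨e', he1, he2⟩ := hstep
      refine ⟨xor π1 (!S.diag e'), fun b => ?_⟩
      have h2 := hedge e' (xor b π1)
      rw [he1, he2] at h2
      calc F _ (xor b (xor π1 (!S.diag e'))) = F _ (xor (xor b π1) (!S.diag e')) := by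
            rw [Bool.xor_assoc]
        _ ≤ F _ (xor b π1) := h2
        _ ≤ F u b := h1 b
  obtain ⟨π, hπ⟩ := hpath (S.term e) (S.init e) (hSC _ _)
  have hE1 : ∀ b, F (S.init e) b = F (S.term e) (xor b (!S.diag e)) := by
    cases hγ : xor (!S.diag e) π
    · intro b
      refine le_antisymm ?_ (hedge e b)
      have h2 := hπ (xor b (!S.diag e))
      have heq : xor (xor b (!S.diag e)) π = b := by
        rw [Bool.xor_assoc, hγ, Bool.xor_false]
      rw [heq] at h2
      exact h2
    · have hflip : ∀ b, F (S.init e) (!b) ≤ F (S.init e) b := by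
        intro b
        have h2 := hπ (xor b (!S.diag e))
        have heq : xor (xor b (!S.diag e)) π = !b := by
          rw [Bool.xor_assoc, hγ, Bool.xor_true]
        rw [heq] at h2
        exact le_trans h2 (hedge e b)
      have heqb : ∀ b, F (S.init e) (!b) = F (S.init e) b := by
        intro b
        refine le_antisymm (hflip b) ?_
        have := hflip (!b)
        rwa [Bool.not_not] at this
      intro b
      refine le_antisymm ?_ (hedge e b)
      have h2 := hπ (xor b (!S.diag e))
      have heq : xor (xor b (!S.diag e)) π = !b := by
        rw [Bool.xor_assoc, hγ, Bool.xor_true]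
      rw [heq] at h2
      calc F (S.init e) b = F (S.init e) (!b) := (heqb b).symm
        _ ≤ F (S.term e) (xor b (!S.diag e)) := h2
  have h1 := hE1 false
  have h2 := hE1 true
  constructor
  · cases hd : S.diag e <;> rw [hd] at h1 <;>
      simpa only [hF, Bool.not_true, Bool.not_false, Bool.xor_false, Bool.xor_true,
        Bool.false_xor, if_true, if_false, Bool.false_eq_true] using h1
  · cases hd : S.diag e <;> rw [hd] at h2 <;>
      simpa only [hF, Bool.not_true, Bool.not_false, Bool.xor_false, Bool.xor_true,
        Bool.true_xor, if_true, if_false, Bool.false_eq_true] using h2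

end BoxLikeGIFS

end LqGIFS

end Aux14C

noncomputable section Aux14D

namespace LqGIFS

namespace BoxLikeGIFS

variable {V E : Type} [Nonempty V]

lemma wdims_cons (S : BoxLikeGIFS V E) (e : E) (w : List E) :
    S.wdims (e :: w) = if S.diag e then (S.a e * (S.wdims w).1, S.b e * (S.wdims w).2)
      else (S.a e * (S.wdims w).2, S.b e * (S.wdims w).1) := rfl

lemma wordDiag_cons (S : BoxLikeGIFS V E) (e : E) (w : List E) :
    S.wordDiag (e :: w) = (S.diag e == S.wordDiag w) := rfl

lemma wdims_pos (S : BoxLikeGIFS V E) (w : List E) :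
    0 < (S.wdims w).1 ∧ 0 < (S.wdims w).2 := by
  induction w with
  | nil => exact ⟨one_pos, one_pos⟩
  | cons e w ih =>
    rw [wdims_cons]
    cases hd : S.diag e <;> simp only [Bool.false_eq_true, if_false, if_true]
    · exact ⟨mul_pos (S.a_mem e).1 ih.2, mul_pos (S.b_mem e).1 ih.1⟩
    · exact ⟨mul_pos (S.a_mem e).1 ih.1, mul_pos (S.b_mem e).1 ih.2⟩

lemma wordDiag_append (S : BoxLikeGIFS V E) (w w' : List E) :
    S.wordDiag (w ++ w') = (S.wordDiag w == S.wordDiag w') := by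
  induction w with
  | nil => simp [wordDiag]
  | cons e w ih =>
    rw [List.cons_append, wordDiag_cons, wordDiag_cons, ih]
    cases S.diag e <;> cases S.wordDiag w <;> cases S.wordDiag w' <;> rfl

lemma wdims_append (S : BoxLikeGIFS V E) (w w' : List E) :
    (S.wdims (w ++ w')).1 =
      (S.wdims w).1 * (if S.wordDiag w then (S.wdims w').1 else (S.wdims w').2) ∧
    (S.wdims (w ++ w')).2 =
      (S.wdims w).2 * (if S.wordDiag w then (S.wdims w').2 else (S.wdims w').1) := by
  induction w with
  | nil =>
    simp only [List.nil_append, wordDiag]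
    norm_num [wdims]
  | cons e w ih =>
    rw [List.cons_append, wdims_cons, wdims_cons, wordDiag_cons]
    cases hd : S.diag e <;> cases hdw : S.wordDiag w <;>
      rw [hdw] at ih <;>
      simp only [ih.1, ih.2] <;> simp <;>
      constructor <;> ring

lemma wordProb_append (p : E → ℝ) (w w' : List E) :
    wordProb p (w ++ w') = wordProb p w * wordProb p w' := by
  unfold wordProb
  rw [List.map_append, List.prod_append]

lemma wordProb_pos {p : E → ℝ} (hp : ∀ e, 0 < p e) (w : List E) : 0 < wordProb p w := by
  unfold wordProb
  apply List.prod_pos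
  intro x hx
  obtain ⟨e, -, rfl⟩ := List.mem_map.1 hx
  exact hp e

lemma wordInit_cons (S : BoxLikeGIFS V E) (e : E) (w : List E) :
    S.wordInit (e :: w) = S.init e := rfl

lemma wordTerm_cons (S : BoxLikeGIFS V E) (e f : E) (w : List E) :
    S.wordTerm (e :: f :: w) = S.wordTerm (f :: w) := by
  unfold wordTerm
  rw [List.getLast?_cons_cons]

lemma wordTerm_append (S : BoxLikeGIFS V E) (w w' : List E) (hw' : w' ≠ []) :
    S.wordTerm (w ++ w') = S.wordTerm w' := by
  unfold wordTerm
  rw [List.getLast?_append, List.getLast?_eq_getLast hw']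
  rfl

lemma alpha2_pos (S : BoxLikeGIFS V E) (w : List E) : 0 < S.alpha2 w :=
  lt_min (S.wdims_pos w).1 (S.wdims_pos w).2

lemma alpha2_append_ge (S : BoxLikeGIFS V E) (w w' : List E) :
    S.alpha2 w * S.alpha2 w' ≤ S.alpha2 (w ++ w') := by
  obtain ⟨hc, hd⟩ := S.wdims_pos w
  obtain ⟨hc', hd'⟩ := S.wdims_pos w'
  unfold alpha2
  rw [(S.wdims_append w w').1, (S.wdims_append w w').2]
  have hmin : 0 ≤ min (S.wdims w).1 (S.wdims w).2 := (lt_min hc hd).le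
  cases hdw : S.wordDiag w <;>
    simp only [if_true, if_false, Bool.false_eq_true]
  · exact le_min
      (mul_le_mul (min_le_left _ _) (min_le_right _ _) (lt_min hc' hd').le hc.le)
      (mul_le_mul (min_le_right _ _) (min_le_left _ _) (lt_min hc' hd').le hd.le)
  · exact le_min
      (mul_le_mul (min_le_left _ _) (min_le_left _ _) (lt_min hc' hd').le hc.le)
      (mul_le_mul (min_le_right _ _) (min_le_right _ _) (lt_min hc' hd').le hd.le)

/-- The "core" of the modified singular value function. -/
def msvfCore (S : BoxLikeGIFS V E) (p : E → ℝ) (τx τy : V → ℝ) (q : ℝ) (w : List E) : ℝ :=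
  wordProb p w ^ q *
    (S.wdims w).1 ^ (if S.wordDiag w then τx (S.wordTerm w) else τy (S.wordTerm w)) *
    (S.wdims w).2 ^ (if S.wordDiag w then τy (S.wordTerm w) else τx (S.wordTerm w))

lemma msvfCore_pos (S : BoxLikeGIFS V E) {p : E → ℝ} (hp : ∀ e, 0 < p e)
    (τx τy : V → ℝ) (q : ℝ) (w : List E) : 0 < S.msvfCore p τx τy q w := by
  unfold msvfCore
  have h1 := wordProb_pos hp w
  have h2 := (S.wdims_pos w).1
  have h3 := (S.wdims_pos w).2
  positivity

lemma msvf_eq_core (S : BoxLikeGIFS V E) (p : E → ℝ) (τx τy : V → ℝ) (s q tq : ℝ)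
    (w : List E) (htq : τx (S.wordTerm w) + τy (S.wordTerm w) = tq) :
    S.msvf p τx τy s q w = S.msvfCore p τx τy q w * (S.alpha2 w) ^ (s - tq) := by
  obtain ⟨hc, hd⟩ := S.wdims_pos w
  rw [msvf, msvfCore, alpha1, alpha2, wordTau]
  by_cases hcd : (S.wdims w).2 ≤ (S.wdims w).1
  · rw [max_eq_left hcd, min_eq_right hcd]
    cases hdw : S.wordDiag w
    · rw [if_neg (by simp [hcd, hdw])]
      simp only [Bool.false_eq_true, if_false]
      rw [show s - τy (S.wordTerm w) = τx (S.wordTerm w) + (s - tq) by linarith,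
        Real.rpow_add hd]
      ring
    · rw [if_pos (by simp [hcd, hdw])]
      simp only [eq_self_iff_true, if_true]
      rw [show s - τx (S.wordTerm w) = τy (S.wordTerm w) + (s - tq) by linarith,
        Real.rpow_add hd]
      ring
  · rw [max_eq_right (le_of_not_ge hcd), min_eq_left (le_of_not_ge hcd)]
    cases hdw : S.wordDiag w
    · rw [if_pos (by simp [hcd, hdw])]
      simp only [Bool.false_eq_true, if_false]
      rw [show s - τx (S.wordTerm w) = τy (S.wordTerm w) + (s - tq) by linarith,
        Real.rpow_add hc]
      ring
    · rw [if_neg (by simp [hcd, hdw])]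
      simp only [eq_self_iff_true, if_true]
      rw [show s - τy (S.wordTerm w) = τx (S.wordTerm w) + (s - tq) by linarith,
        Real.rpow_add hc]
      ring

lemma msvfCore_append (S : BoxLikeGIFS V E) {p : E → ℝ} (hp : ∀ e, 0 < p e)
    (τx τy : V → ℝ) (q : ℝ) (w w' : List E) (hw' : w' ≠ [])
    (hlink : S.wordTerm w = S.wordInit w')
    (hcoh1 : τx (S.wordInit w') =
      (if S.wordDiag w' then τx (S.wordTerm w') else τy (S.wordTerm w')))
    (hcoh2 : τy (S.wordInit w') =
      (if S.wordDiag w' then τy (S.wordTerm w') else τx (S.wordTerm w'))) :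
    S.msvfCore p τx τy q (w ++ w') = S.msvfCore p τx τy q w * S.msvfCore p τx τy q w' := by
  obtain ⟨hc, hd⟩ := S.wdims_pos w
  obtain ⟨hc', hd'⟩ := S.wdims_pos w'
  have hP : 0 < wordProb p w := wordProb_pos hp w
  have hP' : 0 < wordProb p w' := wordProb_pos hp w'
  unfold msvfCore
  rw [wordProb_append, (S.wdims_append w w').1, (S.wdims_append w w').2,
    wordDiag_append, S.wordTerm_append w w' hw', hlink, hcoh1, hcoh2,
    Real.mul_rpow hP.le hP'.le]
  cases hdw : S.wordDiag w <;> cases hdw' : S.wordDiag w' <;>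
    simp only [Bool.false_eq_true, if_false, if_true, show ((false == false) = true) from rfl,
      show ((true == true) = true) from rfl, show ((false == true) = false) from rfl,
      show ((true == false) = false) from rfl] <;>
    rw [Real.mul_rpow hc.le (by positivity), Real.mul_rpow hd.le (by positivity)] <;>
    ring

lemma word_coherence (S : BoxLikeGIFS V E) (τx τy : V → ℝ)
    (hcoh : ∀ e : E, τx (S.init e) = (if S.diag e then τx (S.term e) else τy (S.term e)) ∧
      τy (S.init e) = (if S.diag e then τy (S.term e) else τx (S.term e))) :
    ∀ w : List E, w ≠ [] → S.Admissible w →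
      τx (S.wordInit w) = (if S.wordDiag w then τx (S.wordTerm w) else τy (S.wordTerm w)) ∧
      τy (S.wordInit w) = (if S.wordDiag w then τy (S.wordTerm w) else τx (S.wordTerm w)) := by
  intro w
  induction w with
  | nil => intro h; exact absurd rfl h
  | cons e w ih =>
    intro _ hadm
    cases w with
    | nil =>
      have hwd : S.wordDiag [e] = S.diag e := by
        rw [wordDiag_cons]
        cases S.diag e <;> rfl
      rw [show S.wordInit [e] = S.init e from rfl, show S.wordTerm [e] = S.term e from rfl,
        hwd]
      exact hcoh e
    | cons f wr =>
      have hadm' : S.Admissible (f :: wr) := (List.isChain_cons.1 hadm).2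
      have hlink : S.term e = S.init f := (List.isChain_cons.1 hadm).1 f rfl
      obtain ⟨ih1, ih2⟩ := ih (by simp) hadm'
      have hI : S.wordInit (f :: wr) = S.init f := rfl
      have hT : S.wordTerm (e :: f :: wr) = S.wordTerm (f :: wr) := S.wordTerm_cons e f wr
      have hwd : S.wordDiag (e :: f :: wr) = (S.diag e == S.wordDiag (f :: wr)) := rfl
      rw [show S.wordInit (e :: f :: wr) = S.init e from rfl, hT, hwd]
      obtain ⟨h1, h2⟩ := hcoh e
      rw [hI] at ih1 ih2
      rw [hlink] at h1 h2
      constructor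
      · rw [h1]
        cases hde : S.diag e <;> cases hdw : S.wordDiag (f :: wr) <;>
          rw [hdw] at ih1 ih2 <;> simp [ih1, ih2]
      · rw [h2]
        cases hde : S.diag e <;> cases hdw : S.wordDiag (f :: wr) <;>
          rw [hdw] at ih1 ih2 <;> simp [ih1, ih2]

end BoxLikeGIFS

end LqGIFS

end Aux14D

/-- sub/super-multiplicativity of the modified singular value
function.  For admissible words `w, w'` with `t(w) = i(w')`:  `φ^{s,q}` is
submultiplicative if `s < t(q)`, multiplicative if `s = t(q)`, and supermultiplicative if
`s > t(q)`. -/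
theorem statement14
    {V E : Type} [Fintype V] [Fintype E] [Nonempty V]
    (S : BoxLikeGIFS V E) (hSC : S.StronglyConnected)
    (p : E → ℝ) (hp : S.IsWeights p)
    (μ : V → Measure (ℝ × ℝ)) (hμ : S.IsGDMeasure p μ)
    (s q : ℝ) (hq : 0 ≤ q)
    (τx τy : V → ℝ)
    (hτx : ∀ v : V, HasLq1 ((μ v).map Prod.fst) q (τx v))
    (hτy : ∀ v : V, HasLq1 ((μ v).map Prod.snd) q (τy v))
    (tq : ℝ) (htq : ∀ v : V, τx v + τy v = tq) :
    ∀ w w' : List E, w ≠ [] → w' ≠ [] →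
      S.Admissible w → S.Admissible w' → S.wordTerm w = S.wordInit w' →
      ((s < tq →
          S.msvf p τx τy s q (w ++ w') ≤ S.msvf p τx τy s q w * S.msvf p τx τy s q w') ∧
       (s = tq →
          S.msvf p τx τy s q (w ++ w') = S.msvf p τx τy s q w * S.msvf p τx τy s q w') ∧
       (tq < s →
          S.msvf p τx τy s q w * S.msvf p τx τy s q w' ≤ S.msvf p τx τy s q (w ++ w'))) := by
  intro w w' hw hw' hadw hadw' hlink
  have hppos : ∀ e, 0 < p e := hp.1
  have hcoh := fun e => S.tau_coherence hSC p μ hp hμ hq τx τy hτx hτy e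
  obtain ⟨hc1, hc2⟩ := S.word_coherence τx τy hcoh w' hw' hadw'
  have hEqA : S.msvf p τx τy s q (w ++ w') =
      S.msvfCore p τx τy q w * S.msvfCore p τx τy q w' * (S.alpha2 (w ++ w')) ^ (s - tq) := by
    rw [S.msvf_eq_core p τx τy s q tq (w ++ w') (htq _),
      S.msvfCore_append hppos τx τy q w w' hw' hlink hc1 hc2]
  have hEqB : S.msvf p τx τy s q w * S.msvf p τx τy s q w' =
      S.msvfCore p τx τy q w * S.msvfCore p τx τy q w' *
        ((S.alpha2 w * S.alpha2 w') ^ (s - tq)) := by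
    rw [S.msvf_eq_core p τx τy s q tq w (htq _), S.msvf_eq_core p τx τy s q tq w' (htq _),
      Real.mul_rpow (S.alpha2_pos w).le (S.alpha2_pos w').le]
    ring
  have hCorePos : 0 < S.msvfCore p τx τy q w * S.msvfCore p τx τy q w' :=
    mul_pos (S.msvfCore_pos hppos τx τy q w) (S.msvfCore_pos hppos τx τy q w')
  have hα : S.alpha2 w * S.alpha2 w' ≤ S.alpha2 (w ++ w') := S.alpha2_append_ge w w'
  have hαpos : 0 < S.alpha2 w * S.alpha2 w' := mul_pos (S.alpha2_pos w) (S.alpha2_pos w')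
  refine ⟨?_, ?_, ?_⟩
  · intro hs
    rw [hEqA, hEqB]
    refine mul_le_mul_of_nonneg_left ?_ hCorePos.le
    exact Real.rpow_le_rpow_of_nonpos hαpos hα (by linarith)
  · intro hs
    rw [hEqA, hEqB, hs, sub_self, Real.rpow_zero, Real.rpow_zero]
  · intro hs
    rw [hEqA, hEqB]
    refine mul_le_mul_of_nonneg_left ?_ hCorePos.le
    exact Real.rpow_le_rpow hαpos.le hα (by linarith)
end

section
/- Let (V,E,Ψ) be a strongly connected planar box-like self-affine GIFS with positive weights (p_e) and graph-directed measure family (μ_v)_{v∈V}, and fix q≥0. Then the function (x,y)↦ρ(𝒢^{(q)}_{x,y}) is continuous on ℝ². For each fixed y∈ℝ, x↦ρ(𝒢^{(q)}_{x,y}) is strictly decreasing and there is a unique x∈ℝ with ρ(𝒢^{(q)}_{x,y})=1; likewise, for each fixed x∈ℝ, y↦ρ(𝒢^{(q)}_{x,y}) is strictly decreasing and there is a unique y∈ℝ with ρ(𝒢^{(q)}_{x,y})=1. -/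
open MeasureTheory Filter Set
open scoped Classical

noncomputable section
namespace LqGIFS
set_option linter.unusedSectionVars false
variable {ι : Type*} [Fintype ι] [DecidableEq ι]

lemma mnorm_nonneg (A : Matrix ι ι ℝ) : 0 ≤ mnorm A :=
  Finset.sum_nonneg fun _ _ => Finset.sum_nonneg fun _ _ => abs_nonneg _

lemma rowsum_le_mnorm (A : Matrix ι ι ℝ) (i : ι) : ∑ j, |A i j| ≤ mnorm A :=
  Finset.single_le_sum (f := fun i => ∑ j', |A i j'|)
    (fun _ _ => Finset.sum_nonneg fun _ _ => abs_nonneg _) (Finset.mem_univ i)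

lemma entry_le_mnorm (A : Matrix ι ι ℝ) (i j : ι) : A i j ≤ mnorm A := by
  refine (le_abs_self _).trans ?_
  refine le_trans ?_ (rowsum_le_mnorm A i)
  exact Finset.single_le_sum (f := fun j' => |A i j'|) (fun _ _ => abs_nonneg _)
    (Finset.mem_univ j)

lemma mnorm_mul_le (A B : Matrix ι ι ℝ) : mnorm (A * B) ≤ mnorm A * mnorm B := by
  have h1 : mnorm (A * B) ≤ ∑ i, ∑ k, ∑ j, |A i j| * |B j k| := by
    refine Finset.sum_le_sum fun i _ => Finset.sum_le_sum fun k _ => ?_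
    simp only [Matrix.mul_apply]
    exact (Finset.abs_sum_le_sum_abs _ _).trans (le_of_eq (by simp [abs_mul]))
  refine h1.trans ?_
  have h2 : ∀ i, ∑ k, ∑ j, |A i j| * |B j k| = ∑ j, |A i j| * ∑ k, |B j k| := by
    intro i; rw [Finset.sum_comm]; simp_rw [← Finset.mul_sum]
  simp_rw [h2]
  have h3 : ∀ i, ∑ j, |A i j| * ∑ k, |B j k| ≤ (∑ j, |A i j|) * mnorm B := by
    intro i
    rw [Finset.sum_mul]
    exact Finset.sum_le_sum fun j _ =>
      mul_le_mul_of_nonneg_left (rowsum_le_mnorm B j) (abs_nonneg _)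
  refine (Finset.sum_le_sum fun i _ => h3 i).trans (le_of_eq ?_)
  rw [← Finset.sum_mul]; rfl

lemma mnorm_pow_le (A : Matrix ι ι ℝ) {k : ℕ} (hk : 1 ≤ k) : mnorm (A ^ k) ≤ mnorm A ^ k := by
  induction k, hk using Nat.le_induction with
  | base => simp
  | succ n hn ih =>
    rw [pow_succ, pow_succ]
    exact (mnorm_mul_le _ _).trans (mul_le_mul_of_nonneg_right ih (mnorm_nonneg A))

lemma pow_entry_nonneg {A : Matrix ι ι ℝ} (hA : ∀ i j, 0 ≤ A i j) (k : ℕ) :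
    ∀ i j, 0 ≤ (A ^ k) i j := by
  induction k with
  | zero => intro i j; rw [pow_zero]; by_cases h : i = j <;> simp [Matrix.one_apply, h]
  | succ n ih =>
    intro i j
    rw [pow_succ, Matrix.mul_apply]
    exact Finset.sum_nonneg fun l _ => mul_nonneg (ih i l) (hA l j)

lemma pow_entry_le {A B : Matrix ι ι ℝ} (hA : ∀ i j, 0 ≤ A i j)
    (hAB : ∀ i j, A i j ≤ B i j) (k : ℕ) : ∀ i j, (A ^ k) i j ≤ (B ^ k) i j := by
  induction k with
  | zero => intro i j; simp
  | succ n ih =>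
    intro i j
    rw [pow_succ, pow_succ, Matrix.mul_apply, Matrix.mul_apply]
    refine Finset.sum_le_sum fun l _ => ?_
    exact mul_le_mul (ih i l) (hAB l j) (hA l j) (pow_entry_nonneg
      (fun i j => (hA i j).trans (hAB i j)) n i l)

lemma mnorm_le_mnorm {A B : Matrix ι ι ℝ} (hA : ∀ i j, 0 ≤ A i j)
    (hAB : ∀ i j, A i j ≤ B i j) : mnorm A ≤ mnorm B := by
  refine Finset.sum_le_sum fun i _ => Finset.sum_le_sum fun j _ => ?_
  rw [abs_of_nonneg (hA i j), abs_of_nonneg ((hA i j).trans (hAB i j))]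
  exact hAB i j

lemma specRad_seq_nonneg (A : Matrix ι ι ℝ) (k : ℕ) :
    0 ≤ (mnorm (A ^ k)) ^ ((k : ℝ)⁻¹) := Real.rpow_nonneg (mnorm_nonneg _) _

lemma specRad_seq_bdd (A : Matrix ι ι ℝ) (k : ℕ) :
    (mnorm (A ^ k)) ^ ((k : ℝ)⁻¹) ≤ max 1 (mnorm A) := by
  rcases Nat.eq_zero_or_pos k with rfl | hk
  · simp
  · refine le_max_of_le_right ?_
    have h1 : (mnorm (A ^ k)) ^ ((k : ℝ)⁻¹) ≤ (mnorm A ^ k) ^ ((k : ℝ)⁻¹) :=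
      Real.rpow_le_rpow (mnorm_nonneg _) (mnorm_pow_le A hk) (by positivity)
    refine h1.trans (le_of_eq ?_)
    rw [← Real.rpow_natCast (mnorm A) k, ← Real.rpow_mul (mnorm_nonneg A),
      mul_inv_cancel₀ (by exact_mod_cast hk.ne'), Real.rpow_one]

lemma specRad_isBounded (A : Matrix ι ι ℝ) :
    IsBoundedUnder (· ≤ ·) atTop (fun k : ℕ => (mnorm (A ^ k)) ^ ((k : ℝ)⁻¹)) :=
  isBoundedUnder_of ⟨max 1 (mnorm A), fun k => specRad_seq_bdd A k⟩

lemma specRad_isCobounded (A : Matrix ι ι ℝ) :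
    IsCoboundedUnder (· ≤ ·) atTop (fun k : ℕ => (mnorm (A ^ k)) ^ ((k : ℝ)⁻¹)) :=
  (isBoundedUnder_of ⟨0, fun k => specRad_seq_nonneg A k⟩ :
    IsBoundedUnder (· ≥ ·) atTop _).isCoboundedUnder_le

lemma specRad_nonneg (A : Matrix ι ι ℝ) : 0 ≤ specRad A :=
  le_limsup_of_frequently_le (Frequently.of_forall fun k => specRad_seq_nonneg A k)
    (specRad_isBounded A)


lemma mnorm_smul {c : ℝ} (hc : 0 ≤ c) (A : Matrix ι ι ℝ) : mnorm (c • A) = c * mnorm A := by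
  simp only [mnorm, Matrix.smul_apply, smul_eq_mul, abs_mul, abs_of_nonneg hc,
    Finset.mul_sum]

lemma specRad_le_smul {A B : Matrix ι ι ℝ} (hA : ∀ i j, 0 ≤ A i j) {c : ℝ} (hc : 0 < c)
    (hAB : ∀ i j, A i j ≤ c * B i j) : specRad A ≤ c * specRad B := by
  have hB : ∀ i j, 0 ≤ B i j := fun i j =>
    nonneg_of_mul_nonneg_right (le_trans (hA i j) (hAB i j)) hc
  have hptwise : ∀ k : ℕ, 1 ≤ k →
      (mnorm (A ^ k)) ^ ((k : ℝ)⁻¹) ≤ c * (mnorm (B ^ k)) ^ ((k : ℝ)⁻¹) := by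
    intro k hk
    have h1 : ∀ i j, (A ^ k) i j ≤ ((c • B) ^ k) i j :=
      pow_entry_le hA (fun i j => by simpa using hAB i j) k
    have h2 : mnorm (A ^ k) ≤ mnorm ((c • B) ^ k) :=
      mnorm_le_mnorm (pow_entry_nonneg hA k) h1
    have h3 : mnorm ((c • B) ^ k) = c ^ k * mnorm (B ^ k) := by
      rw [smul_pow, mnorm_smul (by positivity)]
    have h4 : (mnorm (A ^ k)) ^ ((k : ℝ)⁻¹) ≤ (c ^ k * mnorm (B ^ k)) ^ ((k : ℝ)⁻¹) :=
      Real.rpow_le_rpow (mnorm_nonneg _) (h3 ▸ h2) (by positivity)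
    refine h4.trans (le_of_eq ?_)
    rw [Real.mul_rpow (by positivity) (mnorm_nonneg _), ← Real.rpow_natCast c k,
      ← Real.rpow_mul hc.le, mul_inv_cancel₀ (Nat.cast_ne_zero.mpr (by omega)), Real.rpow_one]
  have hstep : specRad A ≤ limsup (fun k : ℕ => c * (mnorm (B ^ k)) ^ ((k : ℝ)⁻¹)) atTop := by
    refine limsup_le_limsup ?_ (specRad_isCobounded A) ?_
    · filter_upwards [eventually_ge_atTop 1] with k hk using hptwise k hk
    · exact isBoundedUnder_of ⟨c * max 1 (mnorm B), fun k =>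
        mul_le_mul_of_nonneg_left (specRad_seq_bdd B k) hc.le⟩
  refine hstep.trans (le_of_eq ?_)
  have hmono : Monotone (fun t : ℝ => c * t) :=
    fun a b h => mul_le_mul_of_nonneg_left h hc.le
  have := hmono.map_limsup_of_continuousAt
    (F := atTop) (fun k : ℕ => (mnorm (B ^ k)) ^ ((k : ℝ)⁻¹))
    ((continuous_const.mul continuous_id).continuousAt)
    (specRad_isBounded B) (specRad_isCobounded B)
  rw [specRad, this]
  rfl

lemma specRad_pos {A : Matrix ι ι ℝ} (hA : ∀ i j, 0 ≤ A i j) {N : ℕ} {i0 : ι}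
    (hN : 1 ≤ N) (hpos : 0 < (A ^ N) i0 i0) : 0 < specRad A := by
  set c := (A ^ N) i0 i0 with hc
  have key : ∀ m : ℕ, c ^ m ≤ (A ^ (N * m)) i0 i0 := by
    intro m
    induction m with
    | zero => simp
    | succ m ih =>
      have h1 : A ^ (N * (m + 1)) = A ^ (N * m) * A ^ N := by
        rw [← pow_add]; ring_nf
      rw [h1, Matrix.mul_apply, pow_succ]
      calc c ^ m * c ≤ (A ^ (N * m)) i0 i0 * (A ^ N) i0 i0 :=
            mul_le_mul_of_nonneg_right ih hpos.le
        _ ≤ ∑ l, (A ^ (N * m)) i0 l * (A ^ N) l i0 :=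
            Finset.single_le_sum (f := fun l => (A ^ (N * m)) i0 l * (A ^ N) l i0)
              (fun l _ => mul_nonneg (pow_entry_nonneg hA _ _ _) (pow_entry_nonneg hA _ _ _))
              (Finset.mem_univ i0)
  have hb : (0 : ℝ) < c ^ ((N : ℝ)⁻¹) := Real.rpow_pos_of_pos hpos _
  refine lt_of_lt_of_le hb ?_
  refine le_limsup_of_frequently_le ?_ (specRad_isBounded A)
  rw [frequently_atTop]
  intro n
  refine ⟨N * max n 1, ?_, ?_⟩
  · calc n ≤ max n 1 := le_max_left _ _
      _ ≤ N * max n 1 := Nat.le_mul_of_pos_left _ (by omega)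
  · set m := max n 1 with hm
    have hm1 : 1 ≤ m := le_max_right _ _
    have h1 : c ^ m ≤ mnorm (A ^ (N * m)) :=
      (key m).trans (entry_le_mnorm _ _ _)
    have h2 : (c ^ m : ℝ) ^ (((N * m : ℕ) : ℝ)⁻¹) ≤ (mnorm (A ^ (N * m))) ^ (((N * m : ℕ) : ℝ)⁻¹) :=
      Real.rpow_le_rpow (by positivity) h1 (by positivity)
    refine le_trans (le_of_eq ?_) h2
    rw [← Real.rpow_natCast c m, ← Real.rpow_mul hpos.le]
    congr 1
    have hNne : (N : ℝ) ≠ 0 := by exact_mod_cast (by omega : N ≠ 0)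
    have hmne : (m : ℝ) ≠ 0 := by exact_mod_cast (by omega : m ≠ 0)
    push_cast
    field_simp


lemma pow_entry_ge_pathProd {A : Matrix ι ι ℝ} (hA : ∀ i j, 0 ≤ A i j) (P : ℕ → ι) :
    ∀ n : ℕ, (∏ i ∈ Finset.range n, A (P i) (P (i + 1))) ≤ (A ^ n) (P 0) (P n) := by
  intro n
  induction n with
  | zero => simp [Matrix.one_apply_eq]
  | succ n ih =>
    rw [pow_succ, Matrix.mul_apply, Finset.prod_range_succ]
    calc (∏ i ∈ Finset.range n, A (P i) (P (i + 1))) * A (P n) (P (n + 1))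
        ≤ (A ^ n) (P 0) (P n) * A (P n) (P (n + 1)) :=
          mul_le_mul_of_nonneg_right ih (hA _ _)
      _ ≤ ∑ l, (A ^ n) (P 0) l * A l (P (n + 1)) :=
          Finset.single_le_sum (f := fun l => (A ^ n) (P 0) l * A l (P (n + 1)))
            (fun l _ => mul_nonneg (pow_entry_nonneg hA n _ _) (hA _ _))
            (Finset.mem_univ (P n))

lemma path_of_transGen {V E : Type*} (ini ter : E → V) {v v' : V}
    (h : Relation.TransGen (fun u u' : V => ∃ e, ini e = u ∧ ter e = u') v v') :
    ∃ (e : E) (l : List E), ini e = v ∧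
      List.Chain' (fun e e' => ter e = ini e') (e :: l) ∧
      ter ((e :: l).getLast (List.cons_ne_nil e l)) = v' := by
  induction h with
  | single h =>
    obtain ⟨e, he1, he2⟩ := h
    exact ⟨e, [], he1, List.isChain_singleton e, he2⟩
  | tail _ h ih =>
    obtain ⟨e', he1', he2'⟩ := h
    obtain ⟨e, l, h1, h2, h3⟩ := ih
    refine ⟨e, l ++ [e'], h1, ?_, ?_⟩
    · refine List.IsChain.append h2 (List.isChain_singleton e') ?_
      intro x hx y hy
      obtain ⟨hne, hx'⟩ := List.mem_getLast?_eq_getLast hx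
      simp only [List.head?_cons, Option.mem_def, Option.some.injEq] at hy
      rw [hx', h3, ← hy, he1']
    · have h4 : ((e :: l) ++ [e']).getLast (by simp) = e' :=
        List.getLast_append_singleton _
      show ter (((e :: l) ++ [e']).getLast (by simp)) = _
      rw [h4]; exact he2'

lemma exists_cycle {V E : Type*} [Nonempty E] (ini ter : E → V)
    (hSC : GraphSC ini ter) :
    ∃ L : ℕ, 0 < L ∧ ∃ ε : ℕ → E,
      (∀ k, ε (k + L) = ε k) ∧ ∀ k, ter (ε k) = ini (ε (k + 1)) := by
  obtain ⟨e0⟩ := (inferInstance : Nonempty E)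
  obtain ⟨e, l, h1, h2, h3⟩ := path_of_transGen ini ter (hSC (ter e0) (ini e0))
  set cl : List E := e0 :: e :: l with hcl
  have hclne : cl ≠ [] := by simp [hcl]
  have hL2 : 2 ≤ cl.length := by simp [hcl]
  set L := cl.length with hLdef
  have hL0 : 0 < L := by omega
  have hchain : List.Chain' (fun e e' => ter e = ini e') cl := by
    rw [hcl, List.Chain', List.isChain_cons_cons]
    exact ⟨h1.symm, h2⟩
  have hget : ∀ (i : ℕ) (h : i < L), cl.getD i e0 = cl.get ⟨i, h⟩ := by
    intro i h
    rw [List.getD_eq_getElem cl e0 h]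
    rfl
  have hwrap : ter (cl.get ⟨L - 1, by omega⟩) = ini (cl.get ⟨0, hL0⟩) := by
    have hlast : cl.getLast hclne = cl.get ⟨L - 1, by omega⟩ := by
      rw [List.getLast_eq_getElem]; rfl
    have hlast2 : cl.getLast hclne = (e :: l).getLast (List.cons_ne_nil e l) :=
      List.getLast_cons _
    rw [← hlast, hlast2, h3]; rfl
  refine ⟨L, hL0, fun k => cl.getD (k % L) e0, fun k => by
    simp only [Nat.add_mod_right], fun k => ?_⟩
  have h1L : 1 % L = 1 := Nat.mod_eq_of_lt (by omega)
  have hmod : (k + 1) % L = (k % L + 1) % L := by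
    conv_lhs => rw [Nat.add_mod, h1L]
  have hkL : k % L < L := Nat.mod_lt _ hL0
  show ter (cl.getD (k % L) e0) = ini (cl.getD ((k + 1) % L) e0)
  by_cases hlt : k % L + 1 < L
  · have hmod2 : (k + 1) % L = k % L + 1 := by rw [hmod, Nat.mod_eq_of_lt hlt]
    rw [hmod2, hget _ hkL, hget _ hlt]
    exact List.isChain_iff_getElem.mp hchain (k % L) (by omega)
  · have hk1 : k % L = L - 1 := by omega
    have hmod2 : (k + 1) % L = 0 := by
      rw [hmod, hk1]
      have : L - 1 + 1 = L := by omega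
      rw [this, Nat.mod_self]
    rw [hmod2, hk1, hget _ (by omega), hget _ hL0]
    exact hwrap

def betaSeq (d : ℕ → Bool) : ℕ → Bool
  | 0 => false
  | k + 1 => xor (!(d (k + 1))) (betaSeq d k)

lemma betaSeq_add (d : ℕ → Bool) (L : ℕ) (hd : ∀ k, d (k + L) = d k) (k : ℕ) :
    betaSeq d (k + L) = xor (betaSeq d L) (betaSeq d k) := by
  induction k with
  | zero => simp [betaSeq]
  | succ k ih =>
    have h1 : k + 1 + L = (k + L) + 1 := by ring
    rw [h1, betaSeq, ih, show k + L + 1 = (k + 1) + L from by ring, hd (k + 1),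
      betaSeq]
    cases d (k + 1) <;> cases betaSeq d L <;> cases betaSeq d k <;> rfl


section GmatLemmas

variable {V E : Type*} [Fintype V] [Fintype E]

/-- The pair of bases carrying the `x`- and `y`-exponents in column `j` of `𝒢`. -/
def xyBase (S : BoxLikeGIFS V E) (j : E × Bool) : ℝ × ℝ :=
  if xor (S.diag j.1) j.2 then (S.a j.1, S.b j.1) else (S.b j.1, S.a j.1)

lemma xyBase_mem (S : BoxLikeGIFS V E) (j : E × Bool) :
    ((xyBase S j).1 = S.a j.1 ∧ (xyBase S j).2 = S.b j.1) ∨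
    ((xyBase S j).1 = S.b j.1 ∧ (xyBase S j).2 = S.a j.1) := by
  unfold xyBase; split_ifs <;> simp

lemma Gmat_nonneg (S : BoxLikeGIFS V E) (p : E → ℝ) (τx τy : V → ℝ) (q : ℝ)
    (hp : ∀ e, 0 < p e) (x y : ℝ) (i j : E × Bool) :
    0 ≤ S.Gmat p τx τy q x y i j := by
  have ha := (S.a_mem j.1).1
  have hb := (S.b_mem j.1).1
  have hpj := hp j.1
  unfold BoxLikeGIFS.Gmat
  split_ifs <;> positivity

lemma Gmat_entry_pos (S : BoxLikeGIFS V E) (p : E → ℝ) (τx τy : V → ℝ) (q : ℝ)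
    (hp : ∀ e, 0 < p e) (x y : ℝ) (i j : E × Bool)
    (hc : S.term i.1 = S.init j.1) (hb : j.2 = xor (!(S.diag j.1)) i.2) :
    0 < S.Gmat p τx τy q x y i j := by
  have ha := (S.a_mem j.1).1
  have hbb := (S.b_mem j.1).1
  have hpj := hp j.1
  unfold BoxLikeGIFS.Gmat
  rw [if_pos hc]
  cases hd : S.diag j.1 <;> rw [hd] at hb <;> cases hi : i.2 <;> rw [hi] at hb <;>
    simp only [Bool.not_true, Bool.not_false, Bool.xor_false, Bool.xor_true] at hb <;>
    simp only [hd, hb, hi, if_true, if_false, Bool.false_eq_true, and_self, and_false,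
      false_and, if_neg, ite_true, ite_false, not_false_eq_true, and_true, true_and] <;>
    norm_num <;> positivity

lemma Gmat_scale (S : BoxLikeGIFS V E) (p : E → ℝ) (τx τy : V → ℝ) (q : ℝ)
    (x y dx dy : ℝ) (i j : E × Bool) :
    S.Gmat p τx τy q (x + dx) (y + dy) i j =
      (xyBase S j).1 ^ dx * (xyBase S j).2 ^ dy * S.Gmat p τx τy q x y i j := by
  have ha := (S.a_mem j.1).1
  have hb := (S.b_mem j.1).1
  unfold BoxLikeGIFS.Gmat xyBase
  by_cases h1 : S.term i.1 = S.init j.1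
  swap
  · simp [h1]
  cases hd : S.diag j.1 <;> cases hi : i.2 <;> cases hj : j.2 <;>
    simp only [h1, hd, hi, hj, if_true, ite_true, ite_false, Bool.xor_false, Bool.xor_true,
      Bool.not_true, Bool.not_false, and_self, and_false, false_and, true_and, and_true,
      Bool.false_eq_true, Bool.true_eq_false, if_false, if_neg, not_false_eq_true] <;>
    norm_num <;>
    simp only [sub_eq_add_neg, Real.rpow_add ha, Real.rpow_add hb] <;> ring

lemma rpow_base_bounds {m M c t : ℝ} (hm : 0 < m) (hmc : m ≤ c) (hcM : c ≤ M) :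
    min (m ^ t) (M ^ t) ≤ c ^ t ∧ c ^ t ≤ max (m ^ t) (M ^ t) := by
  rcases le_or_gt 0 t with ht | ht
  · exact ⟨(min_le_left _ _).trans (Real.rpow_le_rpow hm.le hmc ht),
      le_max_of_le_right (Real.rpow_le_rpow (hm.trans_le hmc).le hcM ht)⟩
  · exact ⟨(min_le_right _ _).trans (Real.rpow_le_rpow_of_nonpos (hm.trans_le hmc) hcM ht.le),
      le_max_of_le_left (Real.rpow_le_rpow_of_nonpos hm hmc ht.le)⟩

end GmatLemmas

lemma strictAnti_and_root {g : ℝ → ℝ} {M : ℝ} (hM0 : 0 < M) (hM1 : M < 1)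
    (hg : Continuous g) (hgpos : ∀ x, 0 < g x)
    (hup : ∀ x t : ℝ, 0 ≤ t → g (x + t) ≤ M ^ t * g x)
    (hlow : ∀ x t : ℝ, 0 ≤ t → M ^ (-t) * g x ≤ g (x + -t)) :
    StrictAnti g ∧ ∃! x, g x = 1 := by
  have hSA : StrictAnti g := by
    intro x1 x2 h
    have ht : 0 < x2 - x1 := by linarith
    have h1 := hup x1 (x2 - x1) ht.le
    rw [add_sub_cancel] at h1
    have h2 : M ^ (x2 - x1) < 1 := Real.rpow_lt_one hM0.le hM1 ht
    calc g x2 ≤ M ^ (x2 - x1) * g x1 := h1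
      _ < 1 * g x1 := mul_lt_mul_of_pos_right h2 (hgpos x1)
      _ = g x1 := one_mul _
  refine ⟨hSA, ?_⟩
  have h0 : 0 < g 0 := hgpos 0
  obtain ⟨T, hT, hT0⟩ : ∃ T : ℝ, M ^ T < min (g 0) (g 0)⁻¹ ∧ 0 ≤ T := by
    have htd := tendsto_rpow_atTop_of_base_lt_one M (by linarith) hM1
    have hev : ∀ᶠ T : ℝ in Filter.atTop, M ^ T < min (g 0) (g 0)⁻¹ :=
      htd.eventually_lt_const (lt_min h0 (by positivity))
    exact (hev.and (Filter.eventually_ge_atTop 0)).exists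
  have hup' : g T ≤ M ^ T * g 0 := by simpa using hup 0 T hT0
  have hlow' : M ^ (-T) * g 0 ≤ g (-T) := by simpa using hlow 0 T hT0
  have hgT : g T < 1 := by
    calc g T ≤ M ^ T * g 0 := hup'
      _ < (g 0)⁻¹ * g 0 := mul_lt_mul_of_pos_right (hT.trans_le (min_le_right _ _)) h0
      _ = 1 := inv_mul_cancel₀ h0.ne'
  have hgmT : 1 < g (-T) := by
    have hMTpos : 0 < M ^ T := Real.rpow_pos_of_pos hM0 T
    have h3 : 1 < M ^ (-T) * g 0 := by
      rw [Real.rpow_neg hM0.le]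
      calc (1 : ℝ) = (M ^ T)⁻¹ * M ^ T := (inv_mul_cancel₀ hMTpos.ne').symm
        _ < (M ^ T)⁻¹ * g 0 :=
          mul_lt_mul_of_pos_left (hT.trans_le (min_le_left _ _)) (by positivity)
    exact h3.trans_le hlow'
  have hsub : Set.Icc (g T) (g (-T)) ⊆ g '' Set.Icc (-T) T :=
    intermediate_value_Icc' (by linarith) hg.continuousOn
  obtain ⟨x, _, hx⟩ := hsub ⟨hgT.le, hgmT.le⟩
  exact ⟨x, hx, fun x' hx' => hSA.injective (hx'.trans hx.symm)⟩

end LqGIFS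
end

open LqGIFS MeasureTheory Filter Set

set_option maxHeartbeats 1000000 in
/-- continuity and monotonicity of `ρ(𝒢^{(q)}_{x,y})`.  The spectral
radius of the block matrix `𝒢^{(q)}_{x,y}` is continuous in `(x,y)` and, in each variable
separately, is strictly decreasing and takes the value `1` at a unique point. -/
theorem statement18
    {V E : Type} [Fintype V] [Fintype E] [Nonempty V]
    (S : BoxLikeGIFS V E) (hSC : S.StronglyConnected)
    (p : E → ℝ) (hp : S.IsWeights p)
    (μ : V → Measure (ℝ × ℝ)) (hμ : S.IsGDMeasure p μ)
    (q : ℝ) (hq : 0 ≤ q)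
    (τx τy : V → ℝ)
    (hτx : ∀ v : V, HasLq1 ((μ v).map Prod.fst) q (τx v))
    (hτy : ∀ v : V, HasLq1 ((μ v).map Prod.snd) q (τy v)) :
    Continuous (fun z : ℝ × ℝ => specRad (S.Gmat p τx τy q z.1 z.2)) ∧
    (∀ y : ℝ, StrictAnti (fun x : ℝ => specRad (S.Gmat p τx τy q x y)) ∧
      ∃! x : ℝ, specRad (S.Gmat p τx τy q x y) = 1) ∧
    (∀ x : ℝ, StrictAnti (fun y : ℝ => specRad (S.Gmat p τx τy q x y)) ∧
      ∃! y : ℝ, specRad (S.Gmat p τx τy q x y) = 1) := by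
  classical
  have hNE : Nonempty E := ⟨(S.edge_exists (Classical.arbitrary V)).choose⟩
  have hpe : ∀ e, 0 < p e := hp.1
  obtain ⟨e0⟩ := hNE
  have hNE : Nonempty E := ⟨e0⟩
  set m : ℝ := Finset.univ.inf' Finset.univ_nonempty (fun e => min (S.a e) (S.b e))
    with hmdef
  set M : ℝ := Finset.univ.sup' Finset.univ_nonempty (fun e => max (S.a e) (S.b e))
    with hMdef
  have hm0 : 0 < m := by
    rw [hmdef, Finset.lt_inf'_iff]
    exact fun e _ => lt_min (S.a_mem e).1 (S.b_mem e).1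
  have hM1 : M < 1 := by
    rw [hMdef, Finset.sup'_lt_iff]
    exact fun e _ => max_lt (S.a_mem e).2 (S.b_mem e).2
  have hbounds : ∀ e : E, m ≤ S.a e ∧ S.a e ≤ M ∧ m ≤ S.b e ∧ S.b e ≤ M := by
    intro e
    have h1 : m ≤ min (S.a e) (S.b e) := Finset.inf'_le _ (Finset.mem_univ e)
    have h2 : max (S.a e) (S.b e) ≤ M := by
      rw [hMdef]; exact Finset.le_sup' (fun e => max (S.a e) (S.b e)) (Finset.mem_univ e)
    exact ⟨h1.trans (min_le_left _ _), (le_max_left _ _).trans h2,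
      h1.trans (min_le_right _ _), (le_max_right _ _).trans h2⟩
  have hmM : m ≤ M := (hbounds e0).1.trans (hbounds e0).2.1
  have hM0 : 0 < M := hm0.trans_le hmM
  set ρ : ℝ → ℝ → ℝ := fun x y => specRad (S.Gmat p τx τy q x y) with hρdef
  have hGnn : ∀ (x y : ℝ) (i j : E × Bool), 0 ≤ S.Gmat p τx τy q x y i j :=
    fun x y i j => Gmat_nonneg S p τx τy q hpe x y i j
  -- entrywise scaling bounds
  have hentry : ∀ (x y dx dy : ℝ) (i j : E × Bool),
      min (m ^ dx) (M ^ dx) * min (m ^ dy) (M ^ dy) * S.Gmat p τx τy q x y i j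
        ≤ S.Gmat p τx τy q (x + dx) (y + dy) i j ∧
      S.Gmat p τx τy q (x + dx) (y + dy) i j
        ≤ max (m ^ dx) (M ^ dx) * max (m ^ dy) (M ^ dy) * S.Gmat p τx τy q x y i j := by
    intro x y dx dy i j
    rw [Gmat_scale]
    have hc : m ≤ (xyBase S j).1 ∧ (xyBase S j).1 ≤ M := by
      rcases xyBase_mem S j with ⟨h1, _⟩ | ⟨h1, _⟩ <;> rw [h1]
      · exact ⟨(hbounds j.1).1, (hbounds j.1).2.1⟩
      · exact ⟨(hbounds j.1).2.2.1, (hbounds j.1).2.2.2⟩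
    have hd : m ≤ (xyBase S j).2 ∧ (xyBase S j).2 ≤ M := by
      rcases xyBase_mem S j with ⟨_, h1⟩ | ⟨_, h1⟩ <;> rw [h1]
      · exact ⟨(hbounds j.1).2.2.1, (hbounds j.1).2.2.2⟩
      · exact ⟨(hbounds j.1).1, (hbounds j.1).2.1⟩
    have hcx := rpow_base_bounds (t := dx) hm0 hc.1 hc.2
    have hdy := rpow_base_bounds (t := dy) hm0 hd.1 hd.2
    have hg := hGnn x y i j
    have hc0 : (0 : ℝ) < (xyBase S j).1 := hm0.trans_le hc.1
    have hd0 : (0 : ℝ) < (xyBase S j).2 := hm0.trans_le hd.1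
    have hminx : (0 : ℝ) ≤ min (m ^ dx) (M ^ dx) :=
      le_min (Real.rpow_pos_of_pos hm0 dx).le (Real.rpow_pos_of_pos hM0 dx).le
    have hminy : (0 : ℝ) ≤ min (m ^ dy) (M ^ dy) :=
      le_min (Real.rpow_pos_of_pos hm0 dy).le (Real.rpow_pos_of_pos hM0 dy).le
    constructor
    · refine mul_le_mul_of_nonneg_right ?_ hg
      exact mul_le_mul hcx.1 hdy.1 hminy (Real.rpow_pos_of_pos hc0 dx).le
    · refine mul_le_mul_of_nonneg_right ?_ hg
      exact mul_le_mul hcx.2 hdy.2 (Real.rpow_pos_of_pos hd0 dy).le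
        (le_max_of_le_left (Real.rpow_pos_of_pos hm0 dx).le)
  -- spectral radius sandwich
  have hsand : ∀ x y dx dy : ℝ,
      min (m ^ dx) (M ^ dx) * min (m ^ dy) (M ^ dy) * ρ x y ≤ ρ (x + dx) (y + dy) ∧
      ρ (x + dx) (y + dy) ≤ max (m ^ dx) (M ^ dx) * max (m ^ dy) (M ^ dy) * ρ x y := by
    intro x y dx dy
    have hlo : (0 : ℝ) < min (m ^ dx) (M ^ dx) * min (m ^ dy) (M ^ dy) :=
      mul_pos (lt_min (Real.rpow_pos_of_pos hm0 dx) (Real.rpow_pos_of_pos hM0 dx))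
        (lt_min (Real.rpow_pos_of_pos hm0 dy) (Real.rpow_pos_of_pos hM0 dy))
    have hhi : (0 : ℝ) < max (m ^ dx) (M ^ dx) * max (m ^ dy) (M ^ dy) :=
      mul_pos (lt_max_of_lt_left (Real.rpow_pos_of_pos hm0 dx))
        (lt_max_of_lt_left (Real.rpow_pos_of_pos hm0 dy))
    constructor
    · have h1 : ρ x y ≤ (min (m ^ dx) (M ^ dx) * min (m ^ dy) (M ^ dy))⁻¹ *
          ρ (x + dx) (y + dy) := by
        refine specRad_le_smul (hGnn x y) (by positivity) ?_
        exact fun i j => (le_inv_mul_iff₀ hlo).mpr (hentry x y dx dy i j).1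
      have h2 := mul_le_mul_of_nonneg_left h1 hlo.le
      rwa [← mul_assoc, mul_inv_cancel₀ hlo.ne', one_mul] at h2
    · exact specRad_le_smul (hGnn _ _) hhi fun i j => (hentry x y dx dy i j).2
  -- positivity of the spectral radius
  have hρpos : ∀ x y : ℝ, 0 < ρ x y := by
    intro x y
    obtain ⟨L, hL, ε, hper, hch⟩ := exists_cycle S.init S.term hSC
    set d : ℕ → Bool := fun k => S.diag (ε k) with hddef
    have hdper : ∀ k, d (k + L) = d k := fun k => by simp only [hddef, hper k]
    set P : ℕ → E × Bool := fun k => (ε k, betaSeq d k) with hPdef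
    have hstep : ∀ k, 0 < S.Gmat p τx τy q x y (P k) (P (k + 1)) := by
      intro k
      refine Gmat_entry_pos S p τx τy q hpe x y _ _ (hch k) ?_
      show betaSeq d (k + 1) = xor (!(S.diag (ε (k + 1)))) (betaSeq d k)
      simp only [betaSeq, hddef]
    have hP2L : P (2 * L) = P 0 := by
      have h1 : ε (2 * L) = ε 0 := by
        rw [show 2 * L = 0 + L + L from by ring, hper, hper]
      have h2 : betaSeq d (2 * L) = betaSeq d 0 := by
        rw [show 2 * L = L + L from by ring, betaSeq_add d L hdper L]
        simp [betaSeq]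
      simp only [hPdef, h1, h2]
    have hprod : 0 < ∏ i ∈ Finset.range (2 * L), S.Gmat p τx τy q x y (P i) (P (i + 1)) :=
      Finset.prod_pos fun i _ => hstep i
    have hpow := pow_entry_ge_pathProd (hGnn x y) P (2 * L)
    rw [hP2L] at hpow
    exact specRad_pos (hGnn x y) (by omega) (lt_of_lt_of_le hprod hpow)
  -- continuity
  have hcont : Continuous fun z : ℝ × ℝ => specRad (S.Gmat p τx τy q z.1 z.2) := by
    rw [continuous_iff_continuousAt]
    rintro ⟨x0, y0⟩
    have hCrpow : ∀ c : ℝ, 0 < c → Continuous fun t : ℝ => c ^ t := fun c hc =>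
      continuous_iff_continuousAt.mpr fun t => Real.continuousAt_const_rpow hc.ne'
    have h1 : Continuous fun z : ℝ × ℝ => z.1 - x0 := continuous_fst.sub continuous_const
    have h2 : Continuous fun z : ℝ × ℝ => z.2 - y0 := continuous_snd.sub continuous_const
    have hcont_lo : Continuous fun z : ℝ × ℝ =>
        min (m ^ (z.1 - x0)) (M ^ (z.1 - x0)) * min (m ^ (z.2 - y0)) (M ^ (z.2 - y0)) *
          ρ x0 y0 :=
      ((((hCrpow m hm0).comp h1).min ((hCrpow M hM0).comp h1)).mul
        (((hCrpow m hm0).comp h2).min ((hCrpow M hM0).comp h2))).mul continuous_const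
    have hcont_hi : Continuous fun z : ℝ × ℝ =>
        max (m ^ (z.1 - x0)) (M ^ (z.1 - x0)) * max (m ^ (z.2 - y0)) (M ^ (z.2 - y0)) *
          ρ x0 y0 :=
      ((((hCrpow m hm0).comp h1).max ((hCrpow M hM0).comp h1)).mul
        (((hCrpow m hm0).comp h2).max ((hCrpow M hM0).comp h2))).mul continuous_const
    have htlo := hcont_lo.tendsto (x0, y0)
    have hthi := hcont_hi.tendsto (x0, y0)
    simp only [sub_self, Real.rpow_zero, min_self, max_self, one_mul] at htlo hthi
    refine tendsto_of_tendsto_of_tendsto_of_le_of_le htlo hthi ?_ ?_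
    · intro z
      have h := (hsand x0 y0 (z.1 - x0) (z.2 - y0)).1
      rwa [add_sub_cancel, add_sub_cancel] at h
    · intro z
      have h := (hsand x0 y0 (z.1 - x0) (z.2 - y0)).2
      rwa [add_sub_cancel, add_sub_cancel] at h
  have key1 : ∀ (y : ℝ) (f : ℝ × ℝ → ℝ), Continuous f → Continuous fun x : ℝ => f (x, y) :=
    fun y f hf => hf.comp (continuous_id.prodMk continuous_const)
  have key2 : ∀ (x : ℝ) (f : ℝ × ℝ → ℝ), Continuous f → Continuous fun y : ℝ => f (x, y) :=
    fun x f hf => hf.comp (continuous_const.prodMk continuous_id)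
  refine ⟨hcont, ?_, ?_⟩
  · intro y
    have hgc : Continuous fun x : ℝ => specRad (S.Gmat p τx τy q x y) := key1 y _ hcont
    refine strictAnti_and_root hM0 hM1 hgc (fun x => hρpos x y) ?_ ?_
    · intro x t ht
      have h := (hsand x y t 0).2
      rw [add_zero] at h
      calc ρ (x + t) y ≤ max (m ^ t) (M ^ t) * max (m ^ (0 : ℝ)) (M ^ (0 : ℝ)) * ρ x y := h
        _ = M ^ t * ρ x y := by
            rw [Real.rpow_zero, Real.rpow_zero, max_self, mul_one,
              max_eq_right (Real.rpow_le_rpow hm0.le hmM ht)]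
    · intro x t ht
      have h := (hsand x y (-t) 0).1
      rw [add_zero] at h
      refine le_trans (le_of_eq ?_) h
      rw [Real.rpow_zero, Real.rpow_zero, min_self, mul_one,
        min_eq_right (Real.rpow_le_rpow_of_nonpos hm0 hmM (neg_nonpos.mpr ht))]
  · intro x
    have hgc : Continuous fun y : ℝ => specRad (S.Gmat p τx τy q x y) := key2 x _ hcont
    refine strictAnti_and_root hM0 hM1 hgc (fun y => hρpos x y) ?_ ?_
    · intro y t ht
      have h := (hsand x y 0 t).2
      rw [add_zero] at h
      calc ρ x (y + t) ≤ max (m ^ (0 : ℝ)) (M ^ (0 : ℝ)) * max (m ^ t) (M ^ t) * ρ x y := h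
        _ = M ^ t * ρ x y := by
            rw [Real.rpow_zero, Real.rpow_zero, max_self, one_mul,
              max_eq_right (Real.rpow_le_rpow hm0.le hmM ht)]
    · intro y t ht
      have h := (hsand x y 0 (-t)).1
      rw [add_zero] at h
      refine le_trans (le_of_eq ?_) h
      rw [Real.rpow_zero, Real.rpow_zero, min_self, one_mul,
        min_eq_right (Real.rpow_le_rpow_of_nonpos hm0 hmM (neg_nonpos.mpr ht))]
end

section
/- Let (V,E,Ψ) be a strongly connected planar box-like self-affine GIFS with positive weights (p_e) and graph-directed measure family (μ_v)_{v∈V}, and fix q≥0. Then there exists a (2#E)×(2#E) permutation matrix Z such that for all x,y∈ℝ, 𝒢^{(q)}_{x,y} = Z·𝒢^{(q)}_{y−t(q), x+t(q)}·Z. In particular ρ(𝒢^{(q)}_{x,y}) = ρ(𝒢^{(q)}_{y−t(q), x+t(q)}) for all x,y∈ℝ. -/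
open MeasureTheory Filter Set
open scoped Classical

open LqGIFS MeasureTheory Filter Set

noncomputable section Aux19

namespace LqGIFS

variable {E : Type} [Fintype E]

/-- The swap permutation matrix on `E × Bool`. -/
def Zswap (E : Type) : Matrix (E × Bool) (E × Bool) ℝ :=
  fun i j => if j = (i.1, !i.2) then 1 else 0

lemma Zswap_eq_iff (j k : E × Bool) : j = (k.1, !k.2) ↔ k = (j.1, !j.2) := by
  constructor <;> rintro rfl <;> simp

lemma Zswap_mul_apply (A : Matrix (E × Bool) (E × Bool) ℝ) (i j : E × Bool) :
    (Zswap E * A) i j = A (i.1, !i.2) j := by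
  simp [Zswap, Matrix.mul_apply, Finset.sum_ite_eq]

lemma mul_Zswap_apply (A : Matrix (E × Bool) (E × Bool) ℝ) (i j : E × Bool) :
    (A * Zswap E) i j = A i (j.1, !j.2) := by
  simp only [Zswap, Matrix.mul_apply]
  have : ∀ k : E × Bool, (if j = (k.1, !k.2) then (1:ℝ) else 0)
      = if k = (j.1, !j.2) then 1 else 0 := fun k => by
    simp [Zswap_eq_iff]
  simp only [this, mul_ite, mul_one, mul_zero, Finset.sum_ite_eq', Finset.mem_univ, if_true]

lemma Zswap_conj_apply (A : Matrix (E × Bool) (E × Bool) ℝ) (i j : E × Bool) :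
    (Zswap E * A * Zswap E) i j = A (i.1, !i.2) (j.1, !j.2) := by
  rw [mul_Zswap_apply, Zswap_mul_apply]

lemma Zswap_mul_Zswap : (Zswap E) * (Zswap E) = 1 := by
  ext i j
  rw [Zswap_mul_apply]
  simp [Zswap, Matrix.one_apply, eq_comm]

lemma Zswap_isPermMatrix : IsPermMatrix (Zswap E) := by
  refine ⟨fun i j => ?_, fun i => ?_, fun j => ?_⟩
  · by_cases h : j = (i.1, !i.2) <;> simp [Zswap, h]
  · exact ⟨(i.1, !i.2), by simp [Zswap], fun j hj => by
      by_contra h; simp [Zswap, h] at hj⟩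
  · refine ⟨(j.1, !j.2), by simp [Zswap, Zswap_eq_iff], fun i hi => ?_⟩
    by_contra h
    have : ¬ j = (i.1, !i.2) := by
      rw [Zswap_eq_iff]; exact h
    simp [Zswap, this] at hi

lemma Zswap_conj_pow (A : Matrix (E × Bool) (E × Bool) ℝ) (k : ℕ) :
    (Zswap E * A * Zswap E) ^ k = Zswap E * A ^ k * Zswap E := by
  induction k with
  | zero => simp [Zswap_mul_Zswap]
  | succ n ih =>
    rw [pow_succ, pow_succ, ih]
    calc Zswap E * A ^ n * Zswap E * (Zswap E * A * Zswap E)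
        = Zswap E * A ^ n * (Zswap E * Zswap E) * A * Zswap E := by
          simp only [Matrix.mul_assoc]
      _ = Zswap E * (A ^ n * A) * Zswap E := by
          rw [Zswap_mul_Zswap]; simp only [Matrix.mul_assoc, Matrix.mul_one]
      _ = _ := rfl

/-- The swap equivalence on `E × Bool`. -/
def swapEquiv (E : Type) : (E × Bool) ≃ (E × Bool) :=
  ⟨fun i => (i.1, !i.2), fun i => (i.1, !i.2), fun i => by simp, fun i => by simp⟩

lemma mnorm_Zswap_conj (A : Matrix (E × Bool) (E × Bool) ℝ) :
    mnorm (Zswap E * A * Zswap E) = mnorm A := by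
  simp only [mnorm, Zswap_conj_apply]
  rw [← Equiv.sum_comp (swapEquiv E) (fun i => ∑ j, |A i j|)]
  refine Finset.sum_congr rfl fun i _ => ?_
  rw [← Equiv.sum_comp (swapEquiv E) (fun j => |A (swapEquiv E i) j|)]
  rfl

lemma specRad_Zswap_conj (A : Matrix (E × Bool) (E × Bool) ℝ) :
    specRad (Zswap E * A * Zswap E) = specRad A := by
  unfold specRad
  congr 1
  funext k
  rw [Zswap_conj_pow, mnorm_Zswap_conj]

end LqGIFS

end Aux19


/-- the symmetry `𝒢^{(q)}_{x,y} = Z 𝒢^{(q)}_{y−t(q), x+t(q)} Z`.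
There is a permutation matrix `Z` conjugating `𝒢^{(q)}_{x,y}` to
`𝒢^{(q)}_{y−t(q), x+t(q)}` for all `x, y`; in particular the two matrices have the same
spectral radius. -/
theorem statement19
    {V E : Type} [Fintype V] [Fintype E] [Nonempty V]
    (S : BoxLikeGIFS V E) (hSC : S.StronglyConnected)
    (p : E → ℝ) (hp : S.IsWeights p)
    (μ : V → Measure (ℝ × ℝ)) (hμ : S.IsGDMeasure p μ)
    (q : ℝ) (hq : 0 ≤ q)
    (τx τy : V → ℝ)
    (hτx : ∀ v : V, HasLq1 ((μ v).map Prod.fst) q (τx v))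
    (hτy : ∀ v : V, HasLq1 ((μ v).map Prod.snd) q (τy v))
    (tq : ℝ) (htq : ∀ v : V, τx v + τy v = tq) :
    ∃ Z : Matrix (E × Bool) (E × Bool) ℝ, IsPermMatrix Z ∧
      (∀ x y : ℝ, S.Gmat p τx τy q x y = Z * S.Gmat p τx τy q (y - tq) (x + tq) * Z) ∧
      (∀ x y : ℝ,
        specRad (S.Gmat p τx τy q x y) = specRad (S.Gmat p τx τy q (y - tq) (x + tq))) := by
  classical
  refine ⟨Zswap E, Zswap_isPermMatrix, ?_, ?_⟩
  · intro x y
    ext i j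
    rw [Zswap_conj_apply]
    obtain ⟨e, s⟩ := i
    obtain ⟨e', s'⟩ := j
    have h1 : (y - tq) + τy (S.term e') = y - τx (S.term e') := by
      have := htq (S.term e'); linarith
    have h2 : (x + tq) - τy (S.term e') = x + τx (S.term e') := by
      have := htq (S.term e'); linarith
    have h3 : (y - tq) + τx (S.term e') = y - τy (S.term e') := by
      have := htq (S.term e'); linarith
    have h4 : (x + tq) - τx (S.term e') = x + τy (S.term e') := by
      have := htq (S.term e'); linarith
    simp only [BoxLikeGIFS.Gmat]
    by_cases hte : S.term e = S.init e'
    · by_cases hd : S.diag e'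
      · cases s <;> cases s' <;>
          simp [hte, hd, h1, h2, h3, h4, mul_right_comm]
      · cases s <;> cases s' <;>
          simp [hte, hd, h1, h2, h3, h4, mul_right_comm]
    · simp [hte]
  · intro x y
    have heq : S.Gmat p τx τy q x y
        = Zswap E * S.Gmat p τx τy q (y - tq) (x + tq) * Zswap E := by
      ext i j
      rw [Zswap_conj_apply]
      obtain ⟨e, s⟩ := i
      obtain ⟨e', s'⟩ := j
      have h1 : (y - tq) + τy (S.term e') = y - τx (S.term e') := by
        have := htq (S.term e'); linarith
      have h2 : (x + tq) - τy (S.term e') = x + τx (S.term e') := by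
        have := htq (S.term e'); linarith
      have h3 : (y - tq) + τx (S.term e') = y - τy (S.term e') := by
        have := htq (S.term e'); linarith
      have h4 : (x + tq) - τx (S.term e') = x + τy (S.term e') := by
        have := htq (S.term e'); linarith
      simp only [BoxLikeGIFS.Gmat]
      by_cases hte : S.term e = S.init e'
      · by_cases hd : S.diag e'
        · cases s <;> cases s' <;>
            simp [hte, hd, h1, h2, h3, h4, mul_right_comm]
        · cases s <;> cases s' <;>
            simp [hte, hd, h1, h2, h3, h4, mul_right_comm]
      · simp [hte]
    rw [heq, specRad_Zswap_conj]
end
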